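/- arXiv:0712.4131 — 2 statements merged into one kernel-verified Lean document; each statement's English description precedes it below -/
import Mathlib

section
/- With the setup above, the map f sending β = (β_1, β_2, …, β_ℓ) to (τ1, β_2, …, β_ℓ), which replaces the first arc of β (namely τ2 traversed from c to d) by τ1 traversed from a to d, is a bijection from P_T(ρ)_{τ2} onto P_T(γ)_{τ1,−τ2}. Moreover, for every β in its domain and every function x assigning nonzero field elements to arcs, x(f(β)) = (x(τ1)/x(τ2)) · x(β). (This is the first half of Lemma 4.5 of the paper in the polygon model.) -/
open scoped Classical

namespace PolygonCA

/-- An oriented arc: an ordered pair of vertices. -/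
abbrev OArc (N : ℕ) := ZMod N × ZMod N

variable (N : ℕ)

/-- `x` lies strictly between `p` and `q` in the counterclockwise cyclic order. -/
def Sbtw (p x q : ZMod N) : Prop :=
  0 < (x - p).val ∧ (x - p).val < (q - p).val

/-- A boundary arc: an unordered pair of cyclically adjacent vertices. -/
def IsBoundaryArc (e : Sym2 (ZMod N)) : Prop :=
  ∃ p : ZMod N, e = s(p, p + 1)

/-- A diagonal: an unordered pair of distinct non-adjacent vertices. -/
def IsPolyDiag (e : Sym2 (ZMod N)) : Prop :=
  ∃ p q : ZMod N, e = s(p, q) ∧ p ≠ q ∧ q ≠ p + 1 ∧ p ≠ q + 1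

/-- An arc: a diagonal or a boundary arc. -/
def IsArc (e : Sym2 (ZMod N)) : Prop :=
  IsPolyDiag N e ∨ IsBoundaryArc N e

/-- Two diagonals cross. -/
def Crosses (e f : Sym2 (ZMod N)) : Prop :=
  ∃ p q u v : ZMod N, e = s(p, q) ∧ f = s(u, v) ∧ Sbtw N p u q ∧ Sbtw N q v p

/-- A triangulation of the convex `N`-gon: a maximal set of pairwise
non-crossing diagonals. -/
structure IsTriangulation (T : Finset (Sym2 (ZMod N))) : Prop where
  diag : ∀ e ∈ T, IsPolyDiag N e
  noncross : ∀ e ∈ T, ∀ f ∈ T, ¬ Crosses N e f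
  maximal : ∀ e, IsPolyDiag N e → (∀ f ∈ T, ¬ Crosses N e f ∧ ¬ Crosses N f e) → e ∈ T

/-- For two (non-crossing) diagonals `e`, `f` both crossing the diagonal
oriented from `a` to `b`: `e` crosses it strictly before `f` does. -/
def CrossBefore (a b : ZMod N) (e f : Sym2 (ZMod N)) : Prop :=
  ∃ c d c' d' : ZMod N, e = s(c, d) ∧ f = s(c', d') ∧
    Sbtw N a c b ∧ Sbtw N b d a ∧ Sbtw N a c' b ∧ Sbtw N b d' a ∧
    (c - a).val ≤ (c' - a).val ∧ (a - d).val ≤ (a - d').val ∧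
    ((c - a).val < (c' - a).val ∨ (a - d).val < (a - d').val)

/-- A `T`-path from `a` to `b`: a nonempty concatenation of oriented arcs of
`T` or boundary arcs, starting at `a` and ending at `b`. -/
def IsTPath (T : Finset (Sym2 (ZMod N))) (a b : ZMod N) (α : List (OArc N)) : Prop :=
  α ≠ [] ∧
  (∀ e ∈ α, Sym2.mk.uncurry e ∈ T ∨ IsBoundaryArc N (Sym2.mk.uncurry e)) ∧
  α.head?.map Prod.fst = some a ∧
  α.getLast?.map Prod.snd = some b ∧
  α.Chain' (fun e f => f.1 = e.2)

/-- A `T`-path is reduced if no arc is immediately followed by its reverse. -/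
def IsReduced (α : List (OArc N)) : Prop :=
  α.Chain' (fun e f => f ≠ (e.2, e.1))

/-- A `(T,γ)`-path, where `γ` is the diagonal oriented from `a` to `b`.
(Positions are `0`-indexed here, so the paper's even positions are the odd
indices.) -/
def IsTGPath (T : Finset (Sym2 (ZMod N))) (a b : ZMod N) (α : List (OArc N)) : Prop :=
  IsTPath N T a b α ∧ IsReduced N α ∧ Odd α.length ∧
  (∀ (i : ℕ) (h : i < α.length), i % 2 = 1 →
      Sym2.mk.uncurry (α.get ⟨i, h⟩) ∈ T ∧ Crosses N (Sym2.mk.uncurry (α.get ⟨i, h⟩)) s(a, b)) ∧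
  (∀ (i j : ℕ) (hi : i < α.length) (hj : j < α.length),
      i % 2 = 1 → j % 2 = 1 → i ≠ j →
      Sym2.mk.uncurry (α.get ⟨i, hi⟩) ≠ Sym2.mk.uncurry (α.get ⟨j, hj⟩)) ∧
  (∀ (i j : ℕ) (hi : i < α.length) (hj : j < α.length),
      i % 2 = 1 → j % 2 = 1 → i < j →
      CrossBefore N a b (Sym2.mk.uncurry (α.get ⟨i, hi⟩)) (Sym2.mk.uncurry (α.get ⟨j, hj⟩)))

/-- The Laurent monomial attached to a path: the product of `x` of the arcs in
odd (paper-)position times the inverse of `x` of the arcs in even position. -/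
noncomputable def pathValue {F : Type*} [Field F] (x : Sym2 (ZMod N) → F)
    (α : List (OArc N)) : F :=
  ∏ i : Fin α.length,
    if (i : ℕ) % 2 = 0 then x (Sym2.mk.uncurry (α.get i)) else (x (Sym2.mk.uncurry (α.get i)))⁻¹

/-- `p1, p2, p3, p4` occur in (counterclockwise) cyclic order, pairwise distinct. -/
def InCyclicOrder (p1 p2 p3 p4 : ZMod N) : Prop :=
  0 < (p2 - p1).val ∧ (p2 - p1).val < (p3 - p1).val ∧ (p3 - p1).val < (p4 - p1).val

/-- A Ptolemy assignment over a field `F`. -/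
def IsPtolemy {F : Type*} [Field F] (x : Sym2 (ZMod N) → F) : Prop :=
  (∀ e, IsArc N e → x e ≠ 0) ∧
  ∀ p1 p2 p3 p4 : ZMod N, InCyclicOrder N p1 p2 p3 p4 →
    x s(p1, p3) * x s(p2, p4) = x s(p1, p2) * x s(p3, p4) + x s(p1, p4) * x s(p2, p3)


set_option linter.dupNamespace false
set_option linter.unusedSectionVars false


section Aux
variable {N : ℕ} [NeZero N]

lemma vkey (x y : ZMod N) :
    (y - x).val + x.val = y.val ∨ (y - x).val + x.val = y.val + N := by
  have h := ZMod.val_add (y - x) x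
  rw [sub_add_cancel] at h
  have h1 : (y - x).val < N := ZMod.val_lt _
  have h2 : x.val < N := ZMod.val_lt _
  have h3 : y.val < N := ZMod.val_lt _
  rcases Nat.lt_or_ge ((y - x).val + x.val) N with hl | hl
  · left; rw [Nat.mod_eq_of_lt hl] at h; omega
  · right
    have h4 : ((y - x).val + x.val) % N = (y - x).val + x.val - N := by
      rw [Nat.mod_eq_sub_mod hl, Nat.mod_eq_of_lt (by omega)]
    omega

lemma veq (x y : ZMod N) : x = y ↔ (x - y).val = 0 := by
  rw [ZMod.val_eq_zero, sub_eq_zero]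

lemma n_rot {x y z w : ZMod N}
    (h1 : Sbtw N x y z) (h2 : Sbtw N z w x) : Sbtw N y z w ∧ Sbtw N w x y := by
  simp only [Sbtw] at *
  have k1 := vkey x y; have k2 := vkey x z; have k3 := vkey z w; have k4 := vkey z x
  have k5 := vkey y z; have k6 := vkey y w; have k7 := vkey w x; have k8 := vkey w y
  have l1 := ZMod.val_lt (y - x); have l2 := ZMod.val_lt (z - x)
  have l3 := ZMod.val_lt (w - z); have l4 := ZMod.val_lt (x - z)
  have l5 := ZMod.val_lt (z - y); have l6 := ZMod.val_lt (w - y)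
  have l7 := ZMod.val_lt (x - w); have l8 := ZMod.val_lt (y - w)
  have m1 := ZMod.val_lt x; have m2 := ZMod.val_lt y
  have m3 := ZMod.val_lt z; have m4 := ZMod.val_lt w
  omega

lemma n_notboth {x p q : ZMod N} (h1 : Sbtw N p x q) (h2 : Sbtw N q x p) : False := by
  simp only [Sbtw] at *
  have k1 := vkey p x; have k2 := vkey p q; have k3 := vkey q x; have k4 := vkey q p
  have l1 := ZMod.val_lt (x - p); have l2 := ZMod.val_lt (q - p)
  have l3 := ZMod.val_lt (x - q); have l4 := ZMod.val_lt (p - q)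
  have m1 := ZMod.val_lt x; have m2 := ZMod.val_lt p; have m3 := ZMod.val_lt q
  omega

section Geo
variable {a b c d : ZMod N} (hc : Sbtw N a c b) (hd : Sbtw N b d a)

include hc hd in
lemma n_nes : a ≠ b ∧ a ≠ c ∧ a ≠ d ∧ b ≠ c ∧ b ≠ d ∧ c ≠ d ∧
    b ≠ a ∧ c ≠ a ∧ d ≠ a ∧ c ≠ b ∧ d ≠ b ∧ d ≠ c := by
  simp only [Sbtw] at *
  simp only [Ne, veq]
  have k1 := vkey a b; have k2 := vkey a c; have k3 := vkey a d
  have k4 := vkey b a; have k5 := vkey b c; have k6 := vkey b d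
  have k7 := vkey c a; have k8 := vkey c b; have k9 := vkey c d
  have k10 := vkey d a; have k11 := vkey d b; have k12 := vkey d c
  have l1 := ZMod.val_lt (b - a); have l2 := ZMod.val_lt (c - a); have l3 := ZMod.val_lt (d - a)
  have l4 := ZMod.val_lt (a - b); have l5 := ZMod.val_lt (c - b); have l6 := ZMod.val_lt (d - b)
  have l7 := ZMod.val_lt (a - c); have l8 := ZMod.val_lt (b - c); have l9 := ZMod.val_lt (d - c)
  have l10 := ZMod.val_lt (a - d); have l11 := ZMod.val_lt (b - d); have l12 := ZMod.val_lt (c - d)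
  have m1 := ZMod.val_lt a; have m2 := ZMod.val_lt b; have m3 := ZMod.val_lt c; have m4 := ZMod.val_lt d
  omega

include hc in
lemma n_aub {u : ZMod N} (hu : Sbtw N c u b) : Sbtw N a u b := by
  simp only [Sbtw] at *
  have k1 := vkey a c; have k2 := vkey a b; have k3 := vkey c u; have k4 := vkey c b
  have k5 := vkey a u
  have l1 := ZMod.val_lt (c - a); have l2 := ZMod.val_lt (b - a); have l3 := ZMod.val_lt (u - c)
  have l4 := ZMod.val_lt (b - c); have l5 := ZMod.val_lt (u - a)
  have m1 := ZMod.val_lt a; have m2 := ZMod.val_lt b; have m3 := ZMod.val_lt c; have m4 := ZMod.val_lt u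
  omega

include hc in
lemma n_bvc {v : ZMod N} (hv : Sbtw N b v a) : Sbtw N b v c := by
  simp only [Sbtw] at *
  have k1 := vkey a c; have k2 := vkey a b; have k3 := vkey b v; have k4 := vkey b a
  have k5 := vkey b c
  have l1 := ZMod.val_lt (c - a); have l2 := ZMod.val_lt (b - a); have l3 := ZMod.val_lt (v - b)
  have l4 := ZMod.val_lt (a - b); have l5 := ZMod.val_lt (c - b)
  have m1 := ZMod.val_lt a; have m2 := ZMod.val_lt b; have m3 := ZMod.val_lt c; have m4 := ZMod.val_lt v
  omega

include hc hd in
lemma n_split_v {v : ZMod N} (hv : Sbtw N b v c) :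
    (Sbtw N b v a ∧ (a - d).val ≤ (a - v).val) ∨ Sbtw N d v c := by
  simp only [Sbtw] at *
  have k1 := vkey a c; have k2 := vkey a b; have k3 := vkey b d; have k4 := vkey b a
  have k5 := vkey b v; have k6 := vkey b c; have k7 := vkey d a; have k8 := vkey v a
  have k9 := vkey d v; have k10 := vkey d c
  have l1 := ZMod.val_lt (c - a); have l2 := ZMod.val_lt (b - a); have l3 := ZMod.val_lt (d - b)
  have l4 := ZMod.val_lt (a - b); have l5 := ZMod.val_lt (v - b); have l6 := ZMod.val_lt (c - b)
  have l7 := ZMod.val_lt (a - d); have l8 := ZMod.val_lt (a - v); have l9 := ZMod.val_lt (v - d)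
  have l10 := ZMod.val_lt (c - d)
  have m1 := ZMod.val_lt a; have m2 := ZMod.val_lt b; have m3 := ZMod.val_lt c
  have m4 := ZMod.val_lt d; have m5 := ZMod.val_lt v
  omega

include hc hd in
lemma n_cud {u : ZMod N} (hu : Sbtw N c u b) : Sbtw N c u d := by
  simp only [Sbtw] at *
  have k1 := vkey a c; have k2 := vkey a b; have k3 := vkey b d; have k4 := vkey b a
  have k5 := vkey c u; have k6 := vkey c b; have k7 := vkey c d
  have l1 := ZMod.val_lt (c - a); have l2 := ZMod.val_lt (b - a); have l3 := ZMod.val_lt (d - b)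
  have l4 := ZMod.val_lt (a - b); have l5 := ZMod.val_lt (u - c); have l6 := ZMod.val_lt (b - c)
  have l7 := ZMod.val_lt (d - c)
  have m1 := ZMod.val_lt a; have m2 := ZMod.val_lt b; have m3 := ZMod.val_lt c
  have m4 := ZMod.val_lt d; have m5 := ZMod.val_lt u
  omega

include hc in
lemma n_cwb {w : ZMod N} (hw : Sbtw N a w b) (h2 : (c - a).val < (w - a).val) :
    Sbtw N c w b := by
  simp only [Sbtw] at *
  have k1 := vkey a c; have k2 := vkey a b; have k3 := vkey a w; have k4 := vkey c w
  have k5 := vkey c b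
  have l1 := ZMod.val_lt (c - a); have l2 := ZMod.val_lt (b - a); have l3 := ZMod.val_lt (w - a)
  have l4 := ZMod.val_lt (w - c); have l5 := ZMod.val_lt (b - c)
  have m1 := ZMod.val_lt a; have m2 := ZMod.val_lt b; have m3 := ZMod.val_lt c; have m4 := ZMod.val_lt w
  omega

include hc in
lemma n_not_cab : ¬ Sbtw N c a b := by
  intro h
  simp only [Sbtw] at *
  have k1 := vkey a c; have k2 := vkey a b; have k3 := vkey c a; have k4 := vkey c b
  have l1 := ZMod.val_lt (c - a); have l2 := ZMod.val_lt (b - a); have l3 := ZMod.val_lt (a - c)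
  have l4 := ZMod.val_lt (b - c)
  have m1 := ZMod.val_lt a; have m2 := ZMod.val_lt b; have m3 := ZMod.val_lt c
  omega

include hc hd in
lemma n_not_cdb : ¬ Sbtw N c d b := by
  intro h
  simp only [Sbtw] at *
  have k1 := vkey a c; have k2 := vkey a b; have k3 := vkey b d; have k4 := vkey b a
  have k5 := vkey c d; have k6 := vkey c b
  have l1 := ZMod.val_lt (c - a); have l2 := ZMod.val_lt (b - a); have l3 := ZMod.val_lt (d - b)
  have l4 := ZMod.val_lt (a - b); have l5 := ZMod.val_lt (d - c); have l6 := ZMod.val_lt (b - c)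
  have m1 := ZMod.val_lt a; have m2 := ZMod.val_lt b; have m3 := ZMod.val_lt c; have m4 := ZMod.val_lt d
  omega

include hc in
lemma n_ord_u {u u' : ZMod N} (hu : Sbtw N c u b) (hu' : Sbtw N c u' b) :
    ((u - c).val ≤ (u' - c).val ↔ (u - a).val ≤ (u' - a).val) ∧
    ((u - c).val < (u' - c).val ↔ (u - a).val < (u' - a).val) := by
  simp only [Sbtw] at *
  have k1 := vkey a c; have k2 := vkey a b; have k3 := vkey c u; have k4 := vkey c u'
  have k5 := vkey c b; have k6 := vkey a u; have k7 := vkey a u'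
  have l1 := ZMod.val_lt (c - a); have l2 := ZMod.val_lt (b - a); have l3 := ZMod.val_lt (u - c)
  have l4 := ZMod.val_lt (u' - c); have l5 := ZMod.val_lt (b - c); have l6 := ZMod.val_lt (u - a)
  have l7 := ZMod.val_lt (u' - a)
  have m1 := ZMod.val_lt a; have m2 := ZMod.val_lt b; have m3 := ZMod.val_lt c
  have m4 := ZMod.val_lt u; have m5 := ZMod.val_lt u'
  omega

include hc in
lemma n_ord_v {v v' : ZMod N} (hv : Sbtw N b v a) (hv' : Sbtw N b v' a) :
    ((c - v).val ≤ (c - v').val ↔ (a - v).val ≤ (a - v').val) ∧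
    ((c - v).val < (c - v').val ↔ (a - v).val < (a - v').val) := by
  simp only [Sbtw] at *
  have k1 := vkey a c; have k2 := vkey a b; have k3 := vkey b v; have k4 := vkey b v'
  have k5 := vkey b a; have k6 := vkey v c; have k7 := vkey v' c
  have k8 := vkey v a; have k9 := vkey v' a
  have l1 := ZMod.val_lt (c - a); have l2 := ZMod.val_lt (b - a); have l3 := ZMod.val_lt (v - b)
  have l4 := ZMod.val_lt (v' - b); have l5 := ZMod.val_lt (a - b); have l6 := ZMod.val_lt (c - v)
  have l7 := ZMod.val_lt (c - v'); have l8 := ZMod.val_lt (a - v); have l9 := ZMod.val_lt (a - v')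
  have m1 := ZMod.val_lt a; have m2 := ZMod.val_lt b; have m3 := ZMod.val_lt c
  have m4 := ZMod.val_lt v; have m5 := ZMod.val_lt v'
  omega

end Geo

lemma rep_unique {p q u v u' v' : ZMod N} (h : s(u, v) = s(u', v'))
    (h1 : Sbtw N p u q) (h2 : Sbtw N q v p) (h1' : Sbtw N p u' q) (h2' : Sbtw N q v' p) :
    u = u' ∧ v = v' := by
  rcases Sym2.eq_iff.mp h with ⟨rfl, rfl⟩ | ⟨rfl, rfl⟩
  · exact ⟨rfl, rfl⟩
  · exact (n_notboth h1' h2).elim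

lemma cross_rep {e : Sym2 (ZMod N)} {p q : ZMod N} (h : Crosses N e s(p, q)) :
    ∃ u v, e = s(u, v) ∧ Sbtw N p u q ∧ Sbtw N q v p := by
  obtain ⟨p', q', U, V, he, hf, h1, h2⟩ := h
  rcases Sym2.eq_iff.mp hf with ⟨rfl, rfl⟩ | ⟨rfl, rfl⟩
  · obtain ⟨hA, hB⟩ := n_rot h1 h2
    exact ⟨q', p', by rw [he, Sym2.eq_swap], hA, hB⟩
  · obtain ⟨hA, hB⟩ := n_rot h2 h1
    exact ⟨p', q', he, hA, hB⟩

lemma cross_mk {p q u v : ZMod N} (h1 : Sbtw N p u q) (h2 : Sbtw N q v p) :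
    Crosses N s(u, v) s(p, q) := by
  obtain ⟨hA, hB⟩ := n_rot h1 h2
  exact ⟨u, v, q, p, rfl, by rw [Sym2.eq_swap], hA, hB⟩

lemma crossbefore_elim {p q u v u' v' : ZMod N}
    (h : CrossBefore N p q s(u, v) s(u', v'))
    (h1 : Sbtw N p u q) (h2 : Sbtw N q v p) (h1' : Sbtw N p u' q) (h2' : Sbtw N q v' p) :
    (u - p).val ≤ (u' - p).val ∧ (p - v).val ≤ (p - v').val ∧
      ((u - p).val < (u' - p).val ∨ (p - v).val < (p - v').val) := by
  obtain ⟨C, D, C', D', he, hf, hC, hD, hC', hD', hle1, hle2, hlt⟩ := h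
  obtain ⟨hu, hv⟩ := rep_unique he h1 h2 hC hD
  obtain ⟨hu', hv'⟩ := rep_unique hf h1' h2' hC' hD'
  subst hu; subst hv; subst hu'; subst hv'
  exact ⟨hle1, hle2, hlt⟩

lemma crossbefore_transfer {a b c d u v u' v' : ZMod N}
    (hc : Sbtw N a c b) (hd : Sbtw N b d a)
    (hu : Sbtw N c u b) (hv : Sbtw N b v a)
    (hu' : Sbtw N c u' b) (hv' : Sbtw N b v' a) :
    CrossBefore N c b s(u, v) s(u', v') ↔ CrossBefore N a b s(u, v) s(u', v') := by
  have haub := n_aub hc hu; have haub' := n_aub hc hu'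
  have hbvc := n_bvc hc hv; have hbvc' := n_bvc hc hv'
  have o1 := n_ord_u hc hu hu'
  have o2 := n_ord_v hc hv hv'
  constructor
  · intro h
    obtain ⟨e1, e2, e3⟩ := crossbefore_elim h hu hbvc hu' hbvc'
    refine ⟨u, v, u', v', rfl, rfl, haub, hv, haub', hv', o1.1.mp e1, o2.1.mp e2, ?_⟩
    rcases e3 with h | h
    · exact Or.inl (o1.2.mp h)
    · exact Or.inr (o2.2.mp h)
  · intro h
    obtain ⟨e1, e2, e3⟩ := crossbefore_elim h haub hv haub' hv'
    refine ⟨u, v, u', v', rfl, rfl, hu, hbvc, hu', hbvc', o1.1.mpr e1, o2.1.mpr e2, ?_⟩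
    rcases e3 with h | h
    · exact Or.inl (o1.2.mpr h)
    · exact Or.inr (o2.2.mpr h)

lemma good_of_rho {T : Finset (Sym2 (ZMod N))} {a b c d : ZMod N}
    (hT : IsTriangulation N T) (hτ2 : s(c, d) ∈ T)
    (hc : Sbtw N a c b) (hd : Sbtw N b d a)
    {e : Sym2 (ZMod N)} (he : e ∈ T) (h : Crosses N e s(c, b)) :
    ∃ u v, e = s(u, v) ∧ Sbtw N c u b ∧ Sbtw N b v a ∧ (a - d).val ≤ (a - v).val := by
  obtain ⟨u, v, rfl, hu, hv⟩ := cross_rep h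
  rcases n_split_v hc hd hv with ⟨h1, h2⟩ | hdvc
  · exact ⟨u, v, rfl, hu, h1, h2⟩
  · exact absurd (cross_mk (n_cud hc hd hu) hdvc) (hT.noncross _ he _ hτ2)

end Aux

section Paths
variable {N : ℕ} [NeZero N]

lemma getLast?_cons_ne {α : Type*} {t : List α} (x : α) (h : t ≠ []) :
    (x :: t).getLast? = t.getLast? := by
  cases t with
  | nil => exact absurd rfl h
  | cons y l => rw [List.getLast?_cons_cons]

lemma head?_get {α : Type*} {t : List α} (h : 0 < t.length) :
    t.head? = some (t.get ⟨0, h⟩) := by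
  cases t with
  | nil => simp at h
  | cons y l => rfl

lemma last_get {α : Type*} {t : List α} (h : t ≠ []) (h' : t.length - 1 < t.length) :
    t.getLast? = some (t.get ⟨t.length - 1, h'⟩) := by
  rw [List.getLast?_eq_getElem?, List.getElem?_eq_getElem h']
  simp [List.get_eq_getElem]

lemma get_cons_succ' {α : Type*} (x : α) (t : List α) (j : ℕ)
    (h1 : j + 1 < (x :: t).length) (hj : j < t.length) :
    (x :: t).get ⟨j + 1, h1⟩ = t.get ⟨j, hj⟩ := by
  simp [List.get_eq_getElem]

lemma sbtw_irrefl {p q : ZMod N} : ¬ Sbtw N p p q := by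
  simp [Sbtw]

lemma forward {T : Finset (Sym2 (ZMod N))} {a b c d : ZMod N}
    (hT : IsTriangulation N T) (hτ2 : s(c, d) ∈ T)
    (hc : Sbtw N a c b) (hd : Sbtw N b d a)
    (hτ1 : s(a, d) ∈ T ∨ IsBoundaryArc N s(a, d))
    {t : List (OArc N)} (hβ : IsTGPath N T c b ((c, d) :: t)) :
    IsTGPath N T a b ((a, d) :: t) ∧ ∀ f ∈ (a, d) :: t, Sym2.mk.uncurry f ≠ s(c, d) := by
  obtain ⟨⟨-, harcs, -, hlast, hchain⟩, hred, hodd, hcross, hdup, horder⟩ := hβ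
  obtain ⟨hab, hac, had, hbc, hbd, hcd, hba, hca, hda, hcb, hdb, hdc⟩ := n_nes hc hd
  have htne : t ≠ [] := by
    rintro rfl
    simp [List.getLast?] at hlast
    exact hdb hlast
  have htpos : 0 < t.length := List.length_pos_iff.mpr htne
  have hgl : ((c, d) :: t).getLast? = t.getLast? := getLast?_cons_ne _ htne
  have memT : ∀ (j : ℕ) (hj : j < t.length), j % 2 = 0 → Sym2.mk.uncurry (t.get ⟨j, hj⟩) ∈ T := by
    intro j hj hj2
    have h1 : j + 1 < ((c, d) :: t).length := by simp; omega
    have h2 := (hcross (j + 1) h1 (by omega)).1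
    rwa [get_cons_succ' _ _ _ h1 hj] at h2
  have goodAt : ∀ (j : ℕ) (hj : j < t.length), j % 2 = 0 →
      ∃ u v, Sym2.mk.uncurry (t.get ⟨j, hj⟩) = s(u, v) ∧ Sbtw N c u b ∧ Sbtw N b v a ∧
        (a - d).val ≤ (a - v).val := by
    intro j hj hj2
    have h1 : j + 1 < ((c, d) :: t).length := by simp; omega
    have h2 := hcross (j + 1) h1 (by omega)
    rw [get_cons_succ' _ _ _ h1 hj] at h2
    exact good_of_rho hT hτ2 hc hd h2.1 h2.2
  refine ⟨⟨⟨by simp, ?_, by simp, ?_, ?_⟩, ?_, ?_, ?_, ?_, ?_⟩, ?_⟩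
  · -- arcs
    intro e he
    rcases List.mem_cons.mp he with rfl | he'
    · exact hτ1
    · exact harcs e (List.mem_cons_of_mem _ he')
  · -- last
    rw [getLast?_cons_ne _ htne]
    rw [hgl] at hlast
    exact hlast
  · -- chain
    simp only [List.Chain', List.isChain_cons] at hchain ⊢
    exact ⟨hchain.1, hchain.2⟩
  · -- reduced
    simp only [IsReduced, List.Chain', List.isChain_cons] at hred ⊢
    refine ⟨?_, hred.2⟩
    intro y hy heq
    have h0 : t.head? = some (t.get ⟨0, htpos⟩) := head?_get htpos
    rw [h0, Option.mem_some_iff] at hy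
    obtain ⟨u, v, hs, hu, hv, -⟩ := goodAt 0 htpos rfl
    rw [hy, heq] at hs
    have hs' : s(d, a) = s(u, v) := hs
    rcases Sym2.eq_iff.mp hs' with ⟨h1, h2⟩ | ⟨h1, h2⟩
    · exact n_not_cdb hc hd (h1 ▸ hu)
    · exact n_not_cab hc (h2 ▸ hu)
  · -- odd length
    exact hodd
  · -- crossing arcs
    intro i h hi2
    obtain ⟨j, rfl⟩ : ∃ j, i = j + 1 := ⟨i - 1, by omega⟩
    have hj : j < t.length := by simp at h; omega
    rw [get_cons_succ' _ _ _ h hj]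
    obtain ⟨u, v, hs, hu, hv, -⟩ := goodAt j hj (by omega)
    refine ⟨memT j hj (by omega), ?_⟩
    rw [hs]
    exact cross_mk (n_aub hc hu) hv
  · -- no duplicates
    intro i j hi hj h1 h2 hne'
    obtain ⟨i', rfl⟩ : ∃ k, i = k + 1 := ⟨i - 1, by omega⟩
    obtain ⟨j', rfl⟩ : ∃ k, j = k + 1 := ⟨j - 1, by omega⟩
    have hi' : i' < t.length := by simp at hi; omega
    have hj' : j' < t.length := by simp at hj; omega
    rw [get_cons_succ' _ _ _ hi hi', get_cons_succ' _ _ _ hj hj']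
    have hb1 : i' + 1 < ((c, d) :: t).length := by simp; omega
    have hb2 : j' + 1 < ((c, d) :: t).length := by simp; omega
    have hres := hdup (i' + 1) (j' + 1) hb1 hb2 h1 h2 hne'
    rwa [get_cons_succ' _ _ _ hb1 hi', get_cons_succ' _ _ _ hb2 hj'] at hres
  · -- order
    intro i j hi hj h1 h2 hlt
    obtain ⟨i', rfl⟩ : ∃ k, i = k + 1 := ⟨i - 1, by omega⟩
    obtain ⟨j', rfl⟩ : ∃ k, j = k + 1 := ⟨j - 1, by omega⟩
    have hi' : i' < t.length := by simp at hi; omega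
    have hj' : j' < t.length := by simp at hj; omega
    rw [get_cons_succ' _ _ _ hi hi', get_cons_succ' _ _ _ hj hj']
    obtain ⟨u, v, hs, hu, hv, -⟩ := goodAt i' hi' (by omega)
    obtain ⟨u', v', hs', hu', hv', -⟩ := goodAt j' hj' (by omega)
    have hb1 : i' + 1 < ((c, d) :: t).length := by simp; omega
    have hb2 : j' + 1 < ((c, d) :: t).length := by simp; omega
    have ho := horder (i' + 1) (j' + 1) hb1 hb2 h1 h2 hlt
    rw [get_cons_succ' _ _ _ hb1 hi', get_cons_succ' _ _ _ hb2 hj', hs, hs'] at ho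
    rw [hs, hs']
    exact (crossbefore_transfer hc hd hu hv hu' hv').mp ho
  · -- avoid
    intro f hf
    rcases List.mem_cons.mp hf with rfl | hf'
    · intro heq
      have heq' : s(a, d) = s(c, d) := heq
      rcases Sym2.eq_iff.mp heq' with ⟨h1, -⟩ | ⟨h1, -⟩
      · exact hac h1
      · exact had h1
    · obtain ⟨⟨j, hj⟩, rfl⟩ := List.mem_iff_get.mp hf'
      rcases Nat.even_or_odd j with hje | hjo
      · obtain ⟨u, v, hs, hu, hv, -⟩ := goodAt j hj (Nat.even_iff.mp hje)
        intro heq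
        rw [heq] at hs
        rcases Sym2.eq_iff.mp hs with ⟨h1, h2⟩ | ⟨h1, h2⟩
        · exact sbtw_irrefl (h1 ▸ hu)
        · exact n_notboth hc (h1 ▸ hv)
      · intro heq
        obtain ⟨m, hm⟩ := hjo
        obtain ⟨k, rfl⟩ : ∃ k, j = k + 1 := ⟨j - 1, by omega⟩
        have hk : k < t.length := by omega
        have hkeven : k % 2 = 0 := by omega
        have hch : ∀ (i : ℕ) (h : i < ((c, d) :: t).length - 1),
            (((c, d) :: t).get ⟨i + 1, by omega⟩).1 = (((c, d) :: t).get ⟨i, by omega⟩).2 :=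
          fun i h => List.isChain_iff_getElem.mp hchain i (by omega)
        have hcc : k + 1 < ((c, d) :: t).length - 1 := by simp; omega
        have hch1 := hch (k + 1) hcc
        have hb1 : k + 1 + 1 < ((c, d) :: t).length := by simp; omega
        have hb2 : k + 1 < ((c, d) :: t).length := by simp; omega
        rw [get_cons_succ' _ _ _ hb1 hj, get_cons_succ' _ _ _ hb2 hk] at hch1
        -- hch1 : (t.get ⟨k+1, hj⟩).1 = (t.get ⟨k, hk⟩).2
        have hpair : s((t.get ⟨k + 1, hj⟩).1, (t.get ⟨k + 1, hj⟩).2) = s(c, d) := heq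
        obtain ⟨u, v, hs, hu, hv, -⟩ := goodAt k hk hkeven
        have hs2 : s((t.get ⟨k, hk⟩).1, (t.get ⟨k, hk⟩).2) = s(u, v) := hs
        rcases Sym2.eq_iff.mp hpair with ⟨hp1, hp2⟩ | ⟨hp1, hp2⟩
        · -- arc = (c, d): previous ends at c
          have hc2 : (t.get ⟨k, hk⟩).2 = c := by rw [← hch1, hp1]
          rcases Sym2.eq_iff.mp hs2 with ⟨-, h2⟩ | ⟨-, h2⟩
          · exact n_notboth hc (by rw [← h2, hc2] at hv; exact hv)
          · exact sbtw_irrefl (by rw [← h2, hc2] at hu; exact hu)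
        · -- arc = (d, c): next starts at c, or it is last
          rcases Nat.lt_or_ge (k + 2) t.length with hlt2 | hge2
          · have hcc2 : k + 2 < ((c, d) :: t).length - 1 := by simp; omega
            have hch2 := hch (k + 2) hcc2
            have hb3 : k + 2 + 1 < ((c, d) :: t).length := by simp; omega
            rw [get_cons_succ' _ _ _ hb3 hlt2, get_cons_succ' _ _ _ (by simp; omega) hj] at hch2
            -- hch2 : (t.get ⟨k+2, _⟩).1 = (t.get ⟨k+1, hj⟩).2 = c
            obtain ⟨u2, v2, hsB, hu2, hv2, -⟩ := goodAt (k + 2) hlt2 (by omega)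
            have hsB2 : s((t.get ⟨k + 2, hlt2⟩).1, (t.get ⟨k + 2, hlt2⟩).2) = s(u2, v2) := hsB
            have hstart : (t.get ⟨k + 2, hlt2⟩).1 = c := by rw [hch2, hp2]
            rcases Sym2.eq_iff.mp hsB2 with ⟨h1, -⟩ | ⟨h1, -⟩
            · exact sbtw_irrefl (by rw [← h1, hstart] at hu2; exact hu2)
            · exact n_notboth hc (by rw [← h1, hstart] at hv2; exact hv2)
          · -- last arc
            have hlen1 : t.length - 1 = k + 1 := by omega
            rw [hgl, last_get htne (by omega)] at hlast
            simp only [Option.map_some, Option.some.injEq] at hlast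
            have : (t.get ⟨t.length - 1, by omega⟩).2 = b := hlast
            rw [show (⟨t.length - 1, by omega⟩ : Fin t.length) = ⟨k + 1, hj⟩ from by
              simp [hlen1]] at this
            rw [hp2] at this
            exact hcb this

lemma backward {T : Finset (Sym2 (ZMod N))} {a b c d : ZMod N}
    (hT : IsTriangulation N T) (hτ2 : s(c, d) ∈ T)
    (hc : Sbtw N a c b) (hd : Sbtw N b d a)
    (hfirst : ∀ e ∈ T, Crosses N e s(a, b) → e ≠ s(c, d) → CrossBefore N a b s(c, d) e)
    {t : List (OArc N)} (hα : IsTGPath N T a b ((a, d) :: t))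
    (havoid : ∀ f ∈ (a, d) :: t, Sym2.mk.uncurry f ≠ s(c, d)) :
    IsTGPath N T c b ((c, d) :: t) := by
  obtain ⟨⟨-, harcs, -, hlast, hchain⟩, hred, hodd, hcross, hdup, horder⟩ := hα
  obtain ⟨hab, hac, had, hbc, hbd, hcd, hba, hca, hda, hcb, hdb, hdc⟩ := n_nes hc hd
  have htne : t ≠ [] := by
    rintro rfl
    simp [List.getLast?] at hlast
    exact hdb hlast
  have htpos : 0 < t.length := List.length_pos_iff.mpr htne
  have hgl : ((a, d) :: t).getLast? = t.getLast? := getLast?_cons_ne _ htne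
  have memT : ∀ (j : ℕ) (hj : j < t.length), j % 2 = 0 → Sym2.mk.uncurry (t.get ⟨j, hj⟩) ∈ T := by
    intro j hj hj2
    have h1 : j + 1 < ((a, d) :: t).length := by simp; omega
    have h2 := (hcross (j + 1) h1 (by omega)).1
    rwa [get_cons_succ' _ _ _ h1 hj] at h2
  have crossG : ∀ (j : ℕ) (hj : j < t.length), j % 2 = 0 →
      Crosses N (Sym2.mk.uncurry (t.get ⟨j, hj⟩)) s(a, b) := by
    intro j hj hj2
    have h1 : j + 1 < ((a, d) :: t).length := by simp; omega
    have h2 := (hcross (j + 1) h1 (by omega)).2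
    rwa [get_cons_succ' _ _ _ h1 hj] at h2
  have avoidT : ∀ (j : ℕ) (hj : j < t.length), Sym2.mk.uncurry (t.get ⟨j, hj⟩) ≠ s(c, d) := by
    intro j hj
    exact havoid _ (List.mem_cons_of_mem _ (List.mem_iff_get.mpr ⟨⟨j, hj⟩, rfl⟩))
  -- first arc analysis
  have hch : ∀ (i : ℕ) (h : i < ((a, d) :: t).length - 1),
      (((a, d) :: t).get ⟨i + 1, by omega⟩).1 = (((a, d) :: t).get ⟨i, by omega⟩).2 :=
    fun i h => List.isChain_iff_getElem.mp hchain i (by omega)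
  have h0b : (0 : ℕ) < ((a, d) :: t).length - 1 := by simp; omega
  have hchain0 : (t.get ⟨0, htpos⟩).1 = d := hch 0 h0b
  obtain ⟨u0, v0, hs0, hu0, hv0⟩ := cross_rep (crossG 0 htpos rfl)
  have hs0' : s(d, (t.get ⟨0, htpos⟩).2) = s(u0, v0) := by
    rw [← hchain0]; exact hs0
  have hv0d : v0 = d := by
    rcases Sym2.eq_iff.mp hs0' with ⟨h1, -⟩ | ⟨h1, -⟩
    · exact (n_notboth (h1.symm ▸ hu0 : Sbtw N a d b) hd).elim
    · exact h1.symm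
  rw [hv0d] at hs0
  have hcb0 := hfirst _ (memT 0 htpos rfl) (crossG 0 htpos rfl) (avoidT 0 htpos)
  rw [hs0] at hcb0
  obtain ⟨-, -, hst⟩ := crossbefore_elim hcb0 hc hd hu0 hd
  have hstrict : (c - a).val < (u0 - a).val := by
    rcases hst with h | h
    · exact h
    · omega
  have hcu0b : Sbtw N c u0 b := n_cwb hc hu0 hstrict
  have goodAt : ∀ (j : ℕ) (hj : j < t.length), j % 2 = 0 →
      ∃ u v, Sym2.mk.uncurry (t.get ⟨j, hj⟩) = s(u, v) ∧ Sbtw N c u b ∧ Sbtw N b v a ∧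
        (a - d).val ≤ (a - v).val := by
    intro j hj hj2
    rcases Nat.eq_zero_or_pos j with rfl | hjpos
    · exact ⟨u0, d, hs0, hcu0b, hd, le_refl _⟩
    · obtain ⟨u, v, hs, hu, hv⟩ := cross_rep (crossG j hj hj2)
      have hcbf := hfirst _ (memT j hj hj2) (crossG j hj hj2) (avoidT j hj)
      rw [hs] at hcbf
      obtain ⟨hle1, hle2, -⟩ := crossbefore_elim hcbf hc hd hu hv
      have hb1 : 1 < ((a, d) :: t).length := by simp; omega
      have h1 : j + 1 < ((a, d) :: t).length := by simp; omega
      have ho := horder 1 (j + 1) hb1 h1 rfl (by omega) (by omega)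
      rw [show (⟨1, hb1⟩ : Fin ((a, d) :: t).length) = ⟨0 + 1, hb1⟩ from rfl] at ho
      rw [get_cons_succ' _ _ _ hb1 htpos, get_cons_succ' _ _ _ h1 hj, hs0, hs] at ho
      obtain ⟨hle1', -, -⟩ := crossbefore_elim ho hu0 hd hu hv
      exact ⟨u, v, hs, n_cwb hc hu (lt_of_lt_of_le hstrict hle1'), hv, hle2⟩
  refine ⟨⟨by simp, ?_, by simp, ?_, ?_⟩, ?_, ?_, ?_, ?_, ?_⟩
  · -- arcs
    intro e he
    rcases List.mem_cons.mp he with rfl | he'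
    · exact Or.inl hτ2
    · exact harcs e (List.mem_cons_of_mem _ he')
  · -- last
    rw [getLast?_cons_ne _ htne]
    rw [hgl] at hlast
    exact hlast
  · -- chain
    simp only [List.Chain', List.isChain_cons] at hchain ⊢
    exact ⟨hchain.1, hchain.2⟩
  · -- reduced
    simp only [IsReduced, List.Chain', List.isChain_cons] at hred ⊢
    refine ⟨?_, hred.2⟩
    intro y hy heq
    have h0 : t.head? = some (t.get ⟨0, htpos⟩) := head?_get htpos
    rw [h0, Option.mem_some_iff] at hy
    subst hy
    apply avoidT 0 htpos
    rw [heq]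
    exact Sym2.eq_swap
  · -- odd length
    exact hodd
  · -- crossing arcs
    intro i h hi2
    obtain ⟨j, rfl⟩ : ∃ j, i = j + 1 := ⟨i - 1, by omega⟩
    have hj : j < t.length := by simp at h; omega
    rw [get_cons_succ' _ _ _ h hj]
    obtain ⟨u, v, hs, hu, hv, -⟩ := goodAt j hj (by omega)
    refine ⟨memT j hj (by omega), ?_⟩
    rw [hs]
    exact cross_mk hu (n_bvc hc hv)
  · -- no duplicates
    intro i j hi hj h1 h2 hne'
    obtain ⟨i', rfl⟩ : ∃ k, i = k + 1 := ⟨i - 1, by omega⟩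
    obtain ⟨j', rfl⟩ : ∃ k, j = k + 1 := ⟨j - 1, by omega⟩
    have hi' : i' < t.length := by simp at hi; omega
    have hj' : j' < t.length := by simp at hj; omega
    rw [get_cons_succ' _ _ _ hi hi', get_cons_succ' _ _ _ hj hj']
    have hb1 : i' + 1 < ((a, d) :: t).length := by simp; omega
    have hb2 : j' + 1 < ((a, d) :: t).length := by simp; omega
    have hres := hdup (i' + 1) (j' + 1) hb1 hb2 h1 h2 hne'
    rwa [get_cons_succ' _ _ _ hb1 hi', get_cons_succ' _ _ _ hb2 hj'] at hres
  · -- order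
    intro i j hi hj h1 h2 hlt
    obtain ⟨i', rfl⟩ : ∃ k, i = k + 1 := ⟨i - 1, by omega⟩
    obtain ⟨j', rfl⟩ : ∃ k, j = k + 1 := ⟨j - 1, by omega⟩
    have hi' : i' < t.length := by simp at hi; omega
    have hj' : j' < t.length := by simp at hj; omega
    rw [get_cons_succ' _ _ _ hi hi', get_cons_succ' _ _ _ hj hj']
    obtain ⟨u, v, hs, hu, hv, -⟩ := goodAt i' hi' (by omega)
    obtain ⟨u', v', hs', hu', hv', -⟩ := goodAt j' hj' (by omega)
    have hb1 : i' + 1 < ((a, d) :: t).length := by simp; omega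
    have hb2 : j' + 1 < ((a, d) :: t).length := by simp; omega
    have ho := horder (i' + 1) (j' + 1) hb1 hb2 h1 h2 hlt
    rw [get_cons_succ' _ _ _ hb1 hi', get_cons_succ' _ _ _ hb2 hj', hs, hs'] at ho
    rw [hs, hs']
    exact (crossbefore_transfer hc hd hu hv hu' hv').mpr ho

end Paths


end PolygonCA

namespace PolygonCA

/-- **Lemma 4.5, first half** (polygon model): with the setup of Lemma 4.2 and
`ρ = {c,b}` oriented from `c` to `b`, the map `f` replacing the first arc
(namely `τ₂` traversed from `c` to `d`) by `τ₁` traversed from `a` to `d` is a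
bijection from `P_T(ρ)_{τ₂}` onto `P_T(γ)_{τ₁,−τ₂}`, and for any assignment
`x` of nonzero field elements to arcs, `x(f(β)) = (x(τ₁)/x(τ₂))·x(β)`. -/
theorem bijection_f (N : ℕ) (hN : 4 ≤ N)
    (T : Finset (Sym2 (ZMod N))) (hT : IsTriangulation N T)
    (a b c d : ZMod N)
    (hγ : IsPolyDiag N s(a, b)) (hγT : s(a, b) ∉ T)
    (hτ2 : s(c, d) ∈ T) (hτ2γ : Crosses N s(c, d) s(a, b))
    (hc : Sbtw N a c b) (hd : Sbtw N b d a)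
    (hfirst : ∀ e ∈ T, Crosses N e s(a, b) → e ≠ s(c, d) →
      CrossBefore N a b s(c, d) e)
    (hτ1 : s(a, d) ∈ T ∨ IsBoundaryArc N s(a, d))
    (hτ3 : s(a, c) ∈ T ∨ IsBoundaryArc N s(a, c))
    {F : Type*} [Field F] (x : Sym2 (ZMod N) → F)
    (hx0 : ∀ e, IsArc N e → x e ≠ 0) :
    Set.BijOn (fun β : List (OArc N) => (a, d) :: β.tail)
      {β | IsTGPath N T c b β ∧ β.head? = some (c, d)}
      {α | IsTGPath N T a b α ∧ α.head? = some (a, d) ∧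
        ∀ f ∈ α, Sym2.mk.uncurry f ≠ s(c, d)} ∧
    ∀ β : List (OArc N), IsTGPath N T c b β → β.head? = some (c, d) →
      pathValue N x ((a, d) :: β.tail) =
        x s(a, d) / x s(c, d) * pathValue N x β := by
  haveI : NeZero N := ⟨by omega⟩
  constructor
  · refine ⟨?_, ?_, ?_⟩
    · -- MapsTo
      rintro β ⟨hβ, hhd⟩
      rcases β with _ | ⟨p, t⟩
      · simp at hhd
      · simp only [List.head?_cons, Option.some.injEq] at hhd
        subst hhd
        obtain ⟨h1, h2⟩ := forward hT hτ2 hc hd hτ1 hβ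
        exact ⟨h1, rfl, h2⟩
    · -- InjOn
      rintro β1 ⟨hβ1, hh1⟩ β2 ⟨hβ2, hh2⟩ heq
      rcases β1 with _ | ⟨p1, t1⟩
      · simp at hh1
      rcases β2 with _ | ⟨p2, t2⟩
      · simp at hh2
      simp only [List.head?_cons, Option.some.injEq] at hh1 hh2
      subst hh1; subst hh2
      simp only [List.tail_cons, List.cons.injEq] at heq
      rw [heq.2]
    · -- SurjOn
      rintro α ⟨hα, hhd, havoid⟩
      rcases α with _ | ⟨p, t⟩
      · simp at hhd
      simp only [List.head?_cons, Option.some.injEq] at hhd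
      subst hhd
      exact ⟨(c, d) :: t, ⟨backward hT hτ2 hc hd hfirst hα havoid, rfl⟩, rfl⟩
  · -- values
    intro β hβ hhd
    rcases β with _ | ⟨p, t⟩
    · simp at hhd
    simp only [List.head?_cons, Option.some.injEq] at hhd
    subst hhd
    simp only [List.tail_cons]
    have hpv : ∀ e : OArc N, pathValue N x (e :: t) = x (Sym2.mk.uncurry e) *
        ∏ i : Fin t.length,
          (if ((i : ℕ) + 1) % 2 = 0 then x (Sym2.mk.uncurry (t.get i))
            else (x (Sym2.mk.uncurry (t.get i)))⁻¹) := by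
      intro e
      rw [pathValue]
      exact Fin.prod_univ_succ (f := fun i : Fin (t.length + 1) =>
        if (i : ℕ) % 2 = 0 then x (Sym2.mk.uncurry ((e :: t).get i))
        else (x (Sym2.mk.uncurry ((e :: t).get i)))⁻¹)
    rw [hpv, hpv]
    simp only [Function.uncurry_apply_pair]
    have hxcd : x s(c, d) ≠ 0 := hx0 _ (Or.inl (hT.diag _ hτ2))
    field_simp


end PolygonCA
end

section
/- With the mutant-arc setup below and x a Ptolemy assignment over a field F, the element x({A,B}) lies in the subring of F generated by the elements x(σ), where σ ranges over the diagonals of T, the mutant arcs M^1, …, M^k and the boundary arcs of the polygon, together with the inverses x(e)^{−1} for e ∈ E_{AB}. (This is the Corollary in Section 5 of the paper: for the acyclic cluster given by T, every cluster variable is a Laurent polynomial in the cluster variables of T together with their one-step mutations, with denominators only from E_{AB}; it realizes Theorem 1.20 of Berenstein–Fomin–Zelevinsky explicitly in the polygon case.) -/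
open scoped Classical

namespace PolygonCA

variable (N : ℕ)

/-- Three vertices form a triangle of the triangulation `T`: they are pairwise
distinct and pairwise joined by arcs of `T` or boundary arcs. -/
def IsTriangleOf (T : Finset (Sym2 (ZMod N))) (p q r : ZMod N) : Prop :=
  p ≠ q ∧ q ≠ r ∧ p ≠ r ∧
  (s(p, q) ∈ T ∨ IsBoundaryArc N s(p, q)) ∧
  (s(q, r) ∈ T ∨ IsBoundaryArc N s(q, r)) ∧
  (s(p, r) ∈ T ∨ IsBoundaryArc N s(p, r))

/-- `M` is the mutant arc (flip) of the diagonal `τ` of the triangulation `T`: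
the unique diagonal different from `τ` such that `(T ∖ {τ}) ∪ {M}` is again a
triangulation. -/
def IsFlip (T : Finset (Sym2 (ZMod N))) (τ M : Sym2 (ZMod N)) : Prop :=
  τ ∈ T ∧ M ≠ τ ∧ IsPolyDiag N M ∧ IsTriangulation N (insert M (T.erase τ))

/-- `e ∈ E_{AB}`: `e` is a boundary arc which is the unique side not crossed by
`{A,B}` of some triangle of `T` not having `A` nor `B` as a vertex. -/
def MemE (T : Finset (Sym2 (ZMod N))) (A B : ZMod N) (e : Sym2 (ZMod N)) : Prop :=
  IsBoundaryArc N e ∧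
  ∃ p q r : ZMod N, IsTriangleOf N T p q r ∧
    p ≠ A ∧ q ≠ A ∧ r ≠ A ∧ p ≠ B ∧ q ≠ B ∧ r ≠ B ∧
    e = s(p, q) ∧ Crosses N s(q, r) s(A, B) ∧ Crosses N s(p, r) s(A, B)

end PolygonCA

namespace PolygonCA

/-! ### Auxiliary development for `laurent_in_mutants` -/

/-- Bundle of the combinatorial context. -/
structure Ctx (N : ℕ) where
  A : ZMod N
  B : ZMod N
  T : Finset (Sym2 (ZMod N))
  hN : 4 ≤ N
  hT : IsTriangulation N T
  hAB : IsPolyDiag N s(A, B)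
  hall : ∀ τ ∈ T, Crosses N τ s(A, B)

namespace Ctx

variable {N : ℕ} (C : Ctx N)
include C

lemma hNpos : 0 < N := by have := C.hN; omega

lemma nz : NeZero N := ⟨by have := C.hN; omega⟩

/-- vertex with coordinate `c` (counterclockwise from `A`). -/
def V (c : ℕ) : ZMod N := C.A + (c : ZMod N)

/-- coordinate of `B`. -/
def m : ℕ := (C.B - C.A).val

omit C in
lemma sbtw_def {p x q : ZMod N} :
    Sbtw N p x q ↔ 0 < (x - p).val ∧ (x - p).val < (q - p).val := Iff.rfl

lemma Vval (a b : ℕ) (ha : a ≤ N) : (C.V b - C.V a).val = (b + (N - a)) % N := by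
  haveI := C.nz
  have h : C.V b - C.V a = ((b + (N - a) : ℕ) : ZMod N) := by
    unfold Ctx.V
    push_cast [Nat.cast_sub ha]
    simp only [ZMod.natCast_self]
    ring
  rw [h, ZMod.val_natCast]

/-- The key `omega`-friendly description of coordinate differences. -/
lemma Vfacts (a b : ℕ) (ha : a < N) (hb : b < N) :
    (a ≤ b ∧ (C.V b - C.V a).val = b - a) ∨ (b < a ∧ (C.V b - C.V a).val = b + N - a) := by
  rw [C.Vval a b (le_of_lt ha)]
  rcases le_or_gt a b with h | h
  · left
    refine ⟨h, ?_⟩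
    have e : b + (N - a) = (b - a) + N := by omega
    rw [e, Nat.add_mod_right, Nat.mod_eq_of_lt (by omega)]
  · right
    refine ⟨h, ?_⟩
    have e : b + (N - a) = b + N - a := by omega
    rw [e, Nat.mod_eq_of_lt (by omega)]

lemma V_inj {a b : ℕ} (ha : a < N) (hb : b < N) (h : C.V a = C.V b) : a = b := by
  have h0 : (C.V b - C.V a).val = 0 := by rw [h, sub_self]; haveI := C.nz; exact ZMod.val_zero
  have := C.Vfacts a b ha hb
  omega

lemma V_zero : C.V 0 = C.A := by simp [Ctx.V]

lemma V_m : C.V C.m = C.B := by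
  haveI := C.nz
  simp [Ctx.V, Ctx.m, ZMod.natCast_val, ZMod.cast_id]

lemma V_succ (a : ℕ) : C.V a + 1 = C.V (a + 1) := by
  simp [Ctx.V]; ring

lemma sym2_eq {a b c d : ℕ} (ha : a < N) (hb : b < N) (hc : c < N) (hd : d < N) :
    s(C.V a, C.V b) = s(C.V c, C.V d) ↔ (a = c ∧ b = d) ∨ (a = d ∧ b = c) := by
  rw [Sym2.eq_iff]
  constructor
  · rintro (⟨h1, h2⟩ | ⟨h1, h2⟩)
    · exact Or.inl ⟨C.V_inj ha hc h1, C.V_inj hb hd h2⟩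
    · exact Or.inr ⟨C.V_inj ha hd h1, C.V_inj hb hc h2⟩
  · rintro (⟨rfl, rfl⟩ | ⟨rfl, rfl⟩)
    · exact Or.inl ⟨rfl, rfl⟩
    · exact Or.inr ⟨rfl, rfl⟩

lemma hm : 2 ≤ C.m ∧ C.m ≤ N - 2 := by
  haveI := C.nz
  have hN := C.hN
  obtain ⟨p, q, hpq, hne, h1, h2⟩ := C.hAB
  have key : C.A ≠ C.B ∧ C.B ≠ C.A + 1 ∧ C.A ≠ C.B + 1 := by
    rcases Sym2.eq_iff.mp hpq with ⟨ha, hb⟩ | ⟨ha, hb⟩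
    · subst ha; subst hb; exact ⟨hne, h1, h2⟩
    · subst ha; subst hb; exact ⟨Ne.symm hne, h2, h1⟩
  obtain ⟨k1, k2, k3⟩ := key
  have hmlt : C.m < N := ZMod.val_lt _
  have hBA : C.B - C.A = ((C.m : ℕ) : ZMod N) := by
    rw [Ctx.m, ZMod.natCast_val, ZMod.cast_id]
  have hm0 : C.m ≠ 0 := by
    intro h
    rw [h] at hBA
    exact k1 (sub_eq_zero.mp (by simpa using hBA)).symm
  have hm1 : C.m ≠ 1 := by
    intro h
    rw [h] at hBA
    exact k2 (by linear_combination (by simpa using hBA : C.B - C.A = 1))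
  have hmN1 : C.m ≠ N - 1 := by
    intro h
    rw [h] at hBA
    have h2 : ((N - 1 : ℕ) : ZMod N) = -1 := by
      push_cast [Nat.cast_sub (by omega : 1 ≤ N)]
      simp [ZMod.natCast_self]
    rw [h2] at hBA
    exact k3 (by linear_combination -hBA)
  omega

/-- The crossing characterization in coordinates. -/
lemma crosses_iff {a b c d : ℕ} (hab : a < b) (hb : b < N) (hcd : c < d) (hd : d < N) :
    Crosses N s(C.V a, C.V b) s(C.V c, C.V d) ↔
      ((a < c ∧ c < b ∧ b < d) ∨ (c < a ∧ a < d ∧ d < b)) := by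
  haveI := C.nz
  constructor
  · rintro ⟨p, q, u, v, he, hf, h1, h2⟩
    rw [sbtw_def] at h1 h2
    rcases Sym2.eq_iff.mp he with ⟨hp, hq⟩ | ⟨hp, hq⟩ <;>
      rcases Sym2.eq_iff.mp hf with ⟨hu, hv⟩ | ⟨hu, hv⟩ <;>
        subst hp <;> subst hq <;> subst hu <;> subst hv <;>
    · have F1 := C.Vfacts a c (by omega) (by omega)
      have F2 := C.Vfacts a d (by omega) (by omega)
      have F3 := C.Vfacts b c (by omega) (by omega)
      have F4 := C.Vfacts b d (by omega) (by omega)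
      have F5 := C.Vfacts a b (by omega) (by omega)
      have F6 := C.Vfacts b a (by omega) (by omega)
      omega
  · rintro (⟨h1, h2, h3⟩ | ⟨h1, h2, h3⟩)
    · refine ⟨C.V a, C.V b, C.V c, C.V d, rfl, rfl, ?_, ?_⟩ <;> rw [sbtw_def] <;>
      · have F1 := C.Vfacts a c (by omega) (by omega)
        have F2 := C.Vfacts a d (by omega) (by omega)
        have F3 := C.Vfacts b c (by omega) (by omega)
        have F4 := C.Vfacts b d (by omega) (by omega)
        have F5 := C.Vfacts a b (by omega) (by omega)
        have F6 := C.Vfacts b a (by omega) (by omega)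
        omega
    · refine ⟨C.V a, C.V b, C.V d, C.V c, rfl, Sym2.eq_swap, ?_, ?_⟩ <;> rw [sbtw_def] <;>
      · have F1 := C.Vfacts a c (by omega) (by omega)
        have F2 := C.Vfacts a d (by omega) (by omega)
        have F3 := C.Vfacts b c (by omega) (by omega)
        have F4 := C.Vfacts b d (by omega) (by omega)
        have F5 := C.Vfacts a b (by omega) (by omega)
        have F6 := C.Vfacts b a (by omega) (by omega)
        omega

end Ctx

end PolygonCA

namespace PolygonCA

namespace Ctx

variable {N : ℕ} (C : Ctx N)
include C

lemma vrep (p : ZMod N) : C.V ((p - C.A).val) = p := by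
  haveI := C.nz
  simp [Ctx.V, ZMod.natCast_val, ZMod.cast_id]

lemma V_cycle : C.V N = C.V 0 := by
  simp [Ctx.V, ZMod.natCast_self]

/-- `(t, b)` is a chord of the triangulation (in coordinates). -/
abbrev Ch (t b : ℕ) : Prop := s(C.V t, C.V b) ∈ C.T

lemma chord_coords {τ : Sym2 (ZMod N)} (hτ : τ ∈ C.T) :
    ∃ t b, (1 ≤ t ∧ t < C.m ∧ C.m < b ∧ b < N) ∧ τ = s(C.V t, C.V b) := by
  haveI := C.nz
  have hm := C.hm
  have hN := C.hN
  obtain ⟨p, q, u, v, he, hf, h1, h2⟩ := C.hall τ hτ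
  rw [sbtw_def] at h1 h2
  set cp := (p - C.A).val with hcp
  set cq := (q - C.A).val with hcq
  have hp : C.V cp = p := C.vrep p
  have hq : C.V cq = q := C.vrep q
  have hcp' : cp < N := ZMod.val_lt _
  have hcq' : cq < N := ZMod.val_lt _
  rw [← hp, ← hq] at h1 h2 he
  have hA : C.A = C.V 0 := (C.V_zero).symm
  have hB : C.B = C.V C.m := (C.V_m).symm
  have hmN : C.m < N := by omega
  rcases Sym2.eq_iff.mp hf with ⟨hu, hv⟩ | ⟨hu, hv⟩
  · subst hu; subst hv
    rw [hA] at h1; rw [hB] at h2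
    have F1 := C.Vfacts cp 0 (by omega) (by omega)
    have F2 := C.Vfacts cp cq (by omega) (by omega)
    have F3 := C.Vfacts cq C.m (by omega) (by omega)
    have F4 := C.Vfacts cq cp (by omega) (by omega)
    refine ⟨cq, cp, by omega, ?_⟩
    rw [he, Sym2.eq_swap]
  · subst hu; subst hv
    rw [hB] at h1; rw [hA] at h2
    have F1 := C.Vfacts cp C.m (by omega) (by omega)
    have F2 := C.Vfacts cp cq (by omega) (by omega)
    have F3 := C.Vfacts cq 0 (by omega) (by omega)
    have F4 := C.Vfacts cq cp (by omega) (by omega)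
    exact ⟨cp, cq, by omega, he⟩

/-- chords of `T` do not cross: coordinate form. -/
lemma nc {t1 b1 t2 b2 : ℕ} (hv1 : 1 ≤ t1 ∧ t1 < C.m ∧ C.m < b1 ∧ b1 < N)
    (hv2 : 1 ≤ t2 ∧ t2 < C.m ∧ C.m < b2 ∧ b2 < N)
    (h1 : C.Ch t1 b1) (h2 : C.Ch t2 b2) :
    ¬ ((t1 < t2 ∧ b1 < b2) ∨ (t2 < t1 ∧ b2 < b1)) := by
  intro hpat
  refine C.hT.noncross _ h1 _ h2 ?_
  rw [C.crosses_iff (by omega) (by omega) (by omega) (by omega)]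
  omega

lemma polydiag_coords {c1 c2 : ℕ} (h1 : c1 < c2) (h2 : c2 < N) (h3 : c2 ≠ c1 + 1)
    (h4 : ¬(c1 = 0 ∧ c2 = N - 1)) : IsPolyDiag N s(C.V c1, C.V c2) := by
  have hN := C.hN
  refine ⟨C.V c1, C.V c2, rfl, ?_, ?_, ?_⟩
  · intro h; have := C.V_inj (by omega) (by omega) h; omega
  · rw [C.V_succ]
    intro h; have := C.V_inj (by omega) (by omega) h; omega
  · rw [C.V_succ]
    rcases Nat.lt_or_ge (c2 + 1) N with hc | hc
    · intro h; have := C.V_inj (by omega) hc h; omega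
    · have hc2 : c2 + 1 = N := by omega
      rw [hc2, C.V_cycle]
      intro h; have := C.V_inj (by omega) (by omega) h; omega

/-- coordinate form of maximality of the triangulation. -/
lemma max_coords {t b : ℕ} (h1 : 1 ≤ t) (h2 : t < C.m) (h3 : C.m < b) (h4 : b < N)
    (H : ∀ t' b', 1 ≤ t' → t' < C.m → C.m < b' → b' < N → C.Ch t' b' →
      ¬((t < t' ∧ b < b') ∨ (t' < t ∧ b' < b))) : C.Ch t b := by
  have hm := C.hm
  refine C.hT.maximal _ (C.polydiag_coords (by omega) (by omega) (by omega) (by omega)) ?_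
  intro f hf
  obtain ⟨t', b', hv', rfl⟩ := C.chord_coords hf
  have hH := H t' b' (by omega) (by omega) (by omega) (by omega) hf
  constructor
  · rw [C.crosses_iff (by omega) (by omega) (by omega) (by omega)]
    omega
  · rw [C.crosses_iff (by omega) (by omega) (by omega) (by omega)]
    omega

/-- every vertex other than `A` and `B` lies on some chord of `T`. -/
lemma partner {c : ℕ} (h1 : 1 ≤ c) (h2 : c < N) (h3 : c ≠ C.m) :
    ∃ t b, (1 ≤ t ∧ t < C.m ∧ C.m < b ∧ b < N) ∧ C.Ch t b ∧ (t = c ∨ b = c) := by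
  have hm := C.hm
  have hN := C.hN
  by_contra hcon
  push_neg at hcon
  rcases Nat.lt_or_ge c (N - 1) with hc | hc
  · -- ear `s(V (c-1), V (c+1))`
    have hEar : s(C.V (c - 1), C.V (c + 1)) ∈ C.T := by
      refine C.hT.maximal _ (C.polydiag_coords (by omega) (by omega) (by omega) (by omega)) ?_
      intro f hf
      obtain ⟨t', b', hv', rfl⟩ := C.chord_coords hf
      have hne := hcon t' b' hv' hf
      constructor
      · rw [C.crosses_iff (by omega) (by omega) (by omega) (by omega)]
        omega
      · rw [C.crosses_iff (by omega) (by omega) (by omega) (by omega)]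
        omega
    obtain ⟨t, b, hv, heq⟩ := C.chord_coords hEar
    rw [C.sym2_eq (by omega) (by omega) (by omega) (by omega)] at heq
    omega
  · -- c = N - 1 : ear `s(V 0, V (N-2))`
    have hc' : c = N - 1 := by omega
    have hEar : s(C.V 0, C.V (N - 2)) ∈ C.T := by
      refine C.hT.maximal _ (C.polydiag_coords (by omega) (by omega) (by omega) (by omega)) ?_
      intro f hf
      obtain ⟨t', b', hv', rfl⟩ := C.chord_coords hf
      have hne := hcon t' b' hv' hf
      constructor
      · rw [C.crosses_iff (by omega) (by omega) (by omega) (by omega)]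
        omega
      · rw [C.crosses_iff (by omega) (by omega) (by omega) (by omega)]
        omega
    obtain ⟨t, b, hv, heq⟩ := C.chord_coords hEar
    rw [C.sym2_eq (by omega) (by omega) (by omega) (by omega)] at heq
    omega

end Ctx

end PolygonCA

namespace PolygonCA

namespace Ctx

variable {N : ℕ} (C : Ctx N)
include C

/-- the partner of top vertex `u` closest to `B` (smallest bottom coordinate). -/
noncomputable def bmin (u : ℕ) : ℕ := sInf {b | C.m < b ∧ b < N ∧ C.Ch u b}

/-- the partner of bottom vertex `u` closest to `B` (largest top coordinate). -/
noncomputable def tmax (u : ℕ) : ℕ := sSup {t | 1 ≤ t ∧ t < C.m ∧ C.Ch t u}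

lemma bmin_spec {u : ℕ} (h1 : 1 ≤ u) (h2 : u < C.m) :
    C.m < C.bmin u ∧ C.bmin u < N ∧ C.Ch u (C.bmin u) := by
  have hm := C.hm
  have hne : {b | C.m < b ∧ b < N ∧ C.Ch u b}.Nonempty := by
    obtain ⟨t, b, hv, hch, hor⟩ := C.partner (c := u) h1 (by omega) (by omega)
    rcases hor with rfl | rfl
    · exact ⟨b, hv.2.2.1, hv.2.2.2, hch⟩
    · omega
  exact Nat.sInf_mem hne

lemma bmin_le {u b : ℕ} (hb : C.m < b) (hbN : b < N) (hch : C.Ch u b) : C.bmin u ≤ b :=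
  Nat.sInf_le ⟨hb, hbN, hch⟩

lemma tmax_spec {u : ℕ} (h1 : C.m < u) (h2 : u < N) :
    1 ≤ C.tmax u ∧ C.tmax u < C.m ∧ C.Ch (C.tmax u) u := by
  have hm := C.hm
  have hne : {t | 1 ≤ t ∧ t < C.m ∧ C.Ch t u}.Nonempty := by
    obtain ⟨t, b, hv, hch, hor⟩ := C.partner (c := u) (by omega) (by omega) (by omega)
    rcases hor with rfl | rfl
    · omega
    · exact ⟨t, hv.1, hv.2.1, hch⟩
  exact Nat.sSup_mem hne ⟨C.m, fun t ht => le_of_lt ht.2.1⟩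

lemma tmax_ge {u t : ℕ} (h1 : 1 ≤ t) (h2 : t < C.m) (hch : C.Ch t u) : t ≤ C.tmax u :=
  le_csSup ⟨C.m, fun t' ht' => le_of_lt ht'.2.1⟩ ⟨h1, h2, hch⟩

/-- consecutive-partner lemma for bottoms of a given top vertex. -/
lemma run_bot {u b1 b2 : ℕ} (h1u : 1 ≤ u) (h2u : u < C.m)
    (hb1 : C.m < b1) (hb2 : b2 < N)
    (h1 : C.Ch u b1) (h2 : C.Ch u b2) (hlt : b1 < b2) : C.Ch u (b1 + 1) := by
  have hm := C.hm
  rcases Nat.eq_or_lt_of_le (Nat.succ_le_of_lt hlt) with he | hgt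
  · have he' : b1 + 1 = b2 := he
    rwa [he']
  · obtain ⟨t'', b'', hv'', hch'', hor⟩ := C.partner (c := b1 + 1) (by omega) (by omega) (by omega)
    rcases hor with rfl | rfl
    · omega
    · have k1 := C.nc ⟨h1u, h2u, hb1, by omega⟩ hv'' h1 hch''
      have k2 := C.nc ⟨h1u, h2u, by omega, hb2⟩ hv'' h2 hch''
      have : t'' = u := by omega
      rwa [← this]

/-- consecutive-partner lemma for tops of a given bottom vertex. -/
lemma run_top {w t1 t2 : ℕ} (hw1 : C.m < w) (hw2 : w < N)
    (ht1 : 1 ≤ t1) (ht2 : t2 < C.m)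
    (h1 : C.Ch t1 w) (h2 : C.Ch t2 w) (hlt : t1 < t2) : C.Ch (t2 - 1) w := by
  have hm := C.hm
  rcases Nat.eq_or_lt_of_le (Nat.succ_le_of_lt hlt) with he | hgt
  · have : t2 - 1 = t1 := by omega
    rwa [this]
  · obtain ⟨t'', b'', hv'', hch'', hor⟩ := C.partner (c := t2 - 1) (by omega) (by omega) (by omega)
    rcases hor with rfl | rfl
    · have k1 := C.nc ⟨ht1, by omega, hw1, hw2⟩ hv'' h1 hch''
      have k2 := C.nc ⟨by omega, ht2, hw1, hw2⟩ hv'' h2 hch''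
      have : b'' = w := by omega
      rwa [← this]
    · omega

/-- the "ear" at `B` is a chord. -/
lemma earB : C.Ch (C.m - 1) (C.m + 1) := by
  have hm := C.hm
  have hN := C.hN
  refine C.max_coords (by omega) (by omega) (by omega) (by omega) ?_
  intro t' b' k1 k2 k3 k4 _
  omega

lemma bmin_m : C.bmin (C.m - 1) = C.m + 1 := by
  have hm := C.hm
  have hN := C.hN
  have h1 := C.bmin_le (u := C.m - 1) (by omega) (by omega) C.earB
  have h2 := C.bmin_spec (u := C.m - 1) (by omega) (by omega)
  omega

/-- next chord along the top side. -/
lemma F2top {c : ℕ} (h2c : 2 ≤ c) (hcm : c < C.m) : C.Ch c (C.bmin (c - 1)) := by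
  have hm := C.hm
  obtain ⟨s1, s2, s3⟩ := C.bmin_spec (u := c - 1) (by omega) (by omega)
  set b := C.bmin (c - 1) with hb
  refine C.max_coords (by omega) (by omega) (by omega) (by omega) ?_
  intro t' b' k1 k2 k3 k4 hch
  rintro (⟨hA1, hA2⟩ | ⟨hA1, hA2⟩)
  · have := C.nc ⟨by omega, by omega, s1, s2⟩ ⟨k1, k2, k3, k4⟩ s3 hch
    omega
  · rcases Nat.lt_or_ge t' (c - 1) with ht' | ht'
    · have := C.nc ⟨k1, k2, k3, k4⟩ ⟨by omega, by omega, s1, s2⟩ hch s3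
      omega
    · have : t' = c - 1 := by omega
      subst this
      have := C.bmin_le k3 k4 hch
      omega

/-- next chord along the bottom side. -/
lemma F2bot {c : ℕ} (hmc : C.m < c) (hc : c < N - 1) : C.Ch (C.tmax (c + 1)) c := by
  have hm := C.hm
  obtain ⟨s1, s2, s3⟩ := C.tmax_spec (u := c + 1) (by omega) (by omega)
  set t := C.tmax (c + 1) with ht
  refine C.max_coords (by omega) (by omega) (by omega) (by omega) ?_
  intro t' b' k1 k2 k3 k4 hch
  rintro (⟨hA1, hA2⟩ | ⟨hA1, hA2⟩)
  · rcases Nat.lt_or_ge (c + 1) b' with hb' | hb'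
    · have := C.nc ⟨k1, k2, k3, k4⟩ ⟨s1, s2, by omega, by omega⟩ hch s3
      omega
    · have : b' = c + 1 := by omega
      subst this
      have := C.tmax_ge k1 k2 hch
      omega
  · have := C.nc ⟨k1, k2, k3, k4⟩ ⟨s1, s2, by omega, by omega⟩ hch s3
    omega

/-- second partner above implies the next one down is a partner (top version). -/
lemma tri_prevbot {u b' : ℕ} (h1 : 1 ≤ u) (h2 : u < C.m)
    (hb' : C.m < b' ∧ b' < N ∧ C.Ch u b') (hne : b' ≠ C.bmin u) :
    C.Ch u (C.bmin u + 1) := by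
  obtain ⟨s1, s2, s3⟩ := C.bmin_spec h1 h2
  have hlt : C.bmin u < b' := lt_of_le_of_ne (C.bmin_le hb'.1 hb'.2.1 hb'.2.2) (Ne.symm hne)
  exact C.run_bot h1 h2 s1 hb'.2.1 s3 hb'.2.2 hlt

/-- second partner below implies the next one up is a partner (bottom version). -/
lemma tri_prevtopside {u t' : ℕ} (h1 : C.m < u) (h2 : u < N)
    (ht' : 1 ≤ t' ∧ t' < C.m ∧ C.Ch t' u) (hne : t' ≠ C.tmax u) :
    C.Ch (C.tmax u - 1) u := by
  obtain ⟨s1, s2, s3⟩ := C.tmax_spec h1 h2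
  have hlt : t' < C.tmax u := lt_of_le_of_ne (C.tmax_ge ht'.1 ht'.2.1 ht'.2.2) hne
  exact C.run_top h1 h2 ht'.1 s2 ht'.2.2 s3 hlt

/-- unique partner, top vertex `u ≥ 2`: the previous chord shares the bottom endpoint. -/
lemma tri_prevtop {u : ℕ} (h1 : 2 ≤ u) (h2 : u < C.m)
    (hsing : ∀ b', C.m < b' → b' < N → C.Ch u b' → b' = C.bmin u) :
    C.Ch (u - 1) (C.bmin u) := by
  have hm := C.hm
  obtain ⟨s1, s2, s3⟩ := C.bmin_spec (by omega) h2
  set b := C.bmin u with hbdef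
  -- is there a partner of `b` smaller than `u`?
  by_cases hQ : ∃ t0, 1 ≤ t0 ∧ t0 < C.m ∧ C.Ch t0 b ∧ t0 < u
  · obtain ⟨t0, k1, k2, k3, k4⟩ := hQ
    exact C.run_top s1 s2 k1 h2 k3 s3 k4
  · push_neg at hQ
    exfalso
    obtain ⟨w1, w2, w3⟩ := C.bmin_spec (u := u - 1) (by omega) (by omega)
    set b'' := C.bmin (u - 1) with hb''
    have hbb : b ≤ b'' := by
      have := C.nc ⟨by omega, by omega, w1, w2⟩ ⟨by omega, h2, s1, s2⟩ w3 s3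
      omega
    have hbne : b ≠ b'' := by
      intro he
      have := hQ (u - 1) (by omega) (by omega) (he ▸ w3)
      omega
    have hgb : C.Ch u b'' := by
      refine C.max_coords (by omega) (by omega) (by omega) (by omega) ?_
      intro t' b0 k1 k2 k3 k4 hch
      rintro (⟨hA1, hA2⟩ | ⟨hA1, hA2⟩)
      · have := C.nc ⟨by omega, h2, s1, s2⟩ ⟨k1, k2, k3, k4⟩ s3 hch
        omega
      · rcases Nat.lt_or_ge t' (u - 1) with ht' | ht'
        · have := C.nc ⟨k1, k2, k3, k4⟩ ⟨by omega, by omega, w1, w2⟩ hch w3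
          omega
        · have : t' = u - 1 := by omega
          subst this
          have := C.bmin_le k3 k4 hch
          omega
    have := hsing b'' w1 w2 hgb
    omega

/-- unique partner, bottom vertex `u ≤ N-2`: the previous chord shares the top endpoint. -/
lemma tri_prevbotside {u : ℕ} (h1 : C.m < u) (h2 : u ≤ N - 2)
    (hsing : ∀ t', 1 ≤ t' → t' < C.m → C.Ch t' u → t' = C.tmax u) :
    C.Ch (C.tmax u) (u + 1) := by
  have hm := C.hm
  have hN := C.hN
  obtain ⟨s1, s2, s3⟩ := C.tmax_spec h1 (by omega)
  set t := C.tmax u with htdef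
  by_cases hP : ∃ b0, C.m < b0 ∧ b0 < N ∧ C.Ch t b0 ∧ u < b0
  · obtain ⟨b0, k1, k2, k3, k4⟩ := hP
    exact C.run_bot s1 s2 h1 k2 s3 k3 k4
  · push_neg at hP
    exfalso
    obtain ⟨w1, w2, w3⟩ := C.tmax_spec (u := u + 1) (by omega) (by omega)
    set t'' := C.tmax (u + 1) with ht''
    have htt : t'' ≤ t := by
      have := C.nc ⟨w1, w2, by omega, by omega⟩ ⟨s1, s2, h1, by omega⟩ w3 s3
      omega
    have htne : t'' ≠ t := by
      intro he
      have := hP (u + 1) (by omega) (by omega) (he ▸ w3)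
      omega
    have hgb : C.Ch t'' u := by
      refine C.max_coords w1 w2 h1 (by omega) ?_
      intro t' b0 k1 k2 k3 k4 hch
      rintro (⟨hA1, hA2⟩ | ⟨hA1, hA2⟩)
      · rcases Nat.lt_or_ge t' t with ht' | ht'
        · have := C.nc ⟨k1, k2, k3, k4⟩ ⟨w1, w2, by omega, by omega⟩ hch w3
          have hb0 : b0 = u + 1 := by omega
          subst hb0
          have := C.tmax_ge k1 k2 hch
          omega
        · rcases Nat.eq_or_lt_of_le ht' with he | hgt
          · subst he
            have := hP b0 k3 k4 hch
            omega
          · have := C.nc ⟨s1, s2, h1, by omega⟩ ⟨k1, k2, k3, k4⟩ s3 hch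
            omega
      · have := C.nc ⟨k1, k2, k3, k4⟩ ⟨w1, w2, by omega, by omega⟩ hch w3
        omega
    have := hsing t'' w1 w2 hgb
    omega

/-- unique partner at top vertex `1`: the chord is the ear at `A`. -/
lemma tri_base_top (hsing : ∀ b', C.m < b' → b' < N → C.Ch 1 b' → b' = C.bmin 1) :
    C.bmin 1 = N - 1 := by
  have hm := C.hm
  have hN := C.hN
  obtain ⟨s1, s2, s3⟩ := C.bmin_spec (u := 1) (by omega) (by omega)
  by_contra hb
  obtain ⟨t'', b'', hv'', hch'', hor⟩ := C.partner (c := C.bmin 1 + 1) (by omega) (by omega) (by omega)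
  rcases hor with rfl | rfl
  · omega
  · have := C.nc ⟨by omega, by omega, s1, s2⟩ hv'' s3 hch''
    have : t'' = 1 := by omega
    subst this
    have := hsing _ hv''.2.2.1 hv''.2.2.2 hch''
    omega

/-- unique partner at bottom vertex `N-1`: the chord is the ear at `A`. -/
lemma tri_base_bot (hsing : ∀ t', 1 ≤ t' → t' < C.m → C.Ch t' (N - 1) → t' = C.tmax (N - 1)) :
    C.tmax (N - 1) = 1 := by
  have hm := C.hm
  have hN := C.hN
  obtain ⟨s1, s2, s3⟩ := C.tmax_spec (u := N - 1) (by omega) (by omega)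
  by_contra ht
  obtain ⟨t'', b'', hv'', hch'', hor⟩ := C.partner (c := C.tmax (N - 1) - 1) (by omega) (by omega) (by omega)
  rcases hor with rfl | rfl
  · have := C.nc hv'' ⟨s1, s2, by omega, by omega⟩ hch'' s3
    have hb : b'' = N - 1 := by omega
    subst hb
    have := hsing _ hv''.1 hv''.2.1 hch''
    omega
  · omega

end Ctx

end PolygonCA

namespace PolygonCA

namespace Ctx

variable {N : ℕ} (C : Ctx N)
include C

lemma poly_coords {e : Sym2 (ZMod N)} (he : IsPolyDiag N e) :
    ∃ c1 c2, c1 < c2 ∧ c2 < N ∧ e = s(C.V c1, C.V c2) := by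
  haveI := C.nz
  obtain ⟨p, q, rfl, hne, -, -⟩ := he
  have hp : C.V ((p - C.A).val) = p := C.vrep p
  have hq : C.V ((q - C.A).val) = q := C.vrep q
  have hp' : (p - C.A).val < N := ZMod.val_lt _
  have hq' : (q - C.A).val < N := ZMod.val_lt _
  have hne' : (p - C.A).val ≠ (q - C.A).val := by
    intro h
    exact hne (by rw [← hp, ← hq, h])
  rcases Nat.lt_or_ge ((p - C.A).val) ((q - C.A).val) with h | h
  · exact ⟨(p - C.A).val, (q - C.A).val, h, hq', by rw [hp, hq]⟩
  · refine ⟨(q - C.A).val, (p - C.A).val, by omega, hp', ?_⟩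
    rw [hp, hq]
    exact Sym2.eq_swap.symm

/-- Generic criterion for being a flip. -/
lemma flip_generic {i1 i2 m1 m2 : ℕ} (hi1 : i1 < i2) (hi2 : i2 < N)
    (hm1 : m1 < m2) (hm2 : m2 < N)
    (hI : s(C.V i1, C.V i2) ∈ C.T)
    (hMpoly : IsPolyDiag N s(C.V m1, C.V m2))
    (hcrossMI : (m1 < i1 ∧ i1 < m2 ∧ m2 < i2) ∨ (i1 < m1 ∧ m1 < i2 ∧ i2 < m2))
    (hMnc : ∀ f ∈ C.T, f ≠ s(C.V i1, C.V i2) →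
      ¬ Crosses N s(C.V m1, C.V m2) f ∧ ¬ Crosses N f s(C.V m1, C.V m2))
    (hpin : ∀ c1 c2, c1 < c2 → c2 < N →
      ((c1 < i1 ∧ i1 < c2 ∧ c2 < i2) ∨ (i1 < c1 ∧ c1 < i2 ∧ i2 < c2)) →
      (∀ f ∈ C.T, f ≠ s(C.V i1, C.V i2) → ¬ Crosses N s(C.V c1, C.V c2) f) →
      c1 = m1 ∧ c2 = m2) :
    IsFlip N C.T s(C.V i1, C.V i2) s(C.V m1, C.V m2) := by
  have hMneI : s(C.V m1, C.V m2) ≠ s(C.V i1, C.V i2) := by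
    intro h
    rw [C.sym2_eq (a := m1) (b := m2) (c := i1) (d := i2) (by omega) hm2 (by omega) hi2] at h
    omega
  refine ⟨hI, hMneI, hMpoly, ?_, ?_, ?_⟩
  · -- diag
    intro e hee
    rcases Finset.mem_insert.mp hee with rfl | hee
    · exact hMpoly
    · exact C.hT.diag e (Finset.mem_of_mem_erase hee)
  · -- noncross
    intro e hee f hfe
    rcases Finset.mem_insert.mp hee with rfl | hee <;>
      rcases Finset.mem_insert.mp hfe with rfl | hfe
    · rw [C.crosses_iff hm1 hm2 hm1 hm2]
      omega
    · exact (hMnc f (Finset.mem_of_mem_erase hfe) (Finset.ne_of_mem_erase hfe)).1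
    · exact (hMnc e (Finset.mem_of_mem_erase hee) (Finset.ne_of_mem_erase hee)).2
    · exact C.hT.noncross e (Finset.mem_of_mem_erase hee) f (Finset.mem_of_mem_erase hfe)
  · -- maximal
    intro e hpoly H
    obtain ⟨c1, c2, hc12, hc2N, rfl⟩ := C.poly_coords hpoly
    have HM := H _ (Finset.mem_insert_self _ _)
    by_cases heI : s(C.V c1, C.V c2) = s(C.V i1, C.V i2)
    · exfalso
      apply HM.1
      rw [heI, C.crosses_iff hi1 hi2 hm1 hm2]
      omega
    · by_cases hxI : (c1 < i1 ∧ i1 < c2 ∧ c2 < i2) ∨ (i1 < c1 ∧ c1 < i2 ∧ i2 < c2)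
      · -- e crosses I, so e = M
        have H' : ∀ f ∈ C.T, f ≠ s(C.V i1, C.V i2) → ¬ Crosses N s(C.V c1, C.V c2) f := by
          intro f hf hne
          exact (H f (Finset.mem_insert_of_mem (Finset.mem_erase.mpr ⟨hne, hf⟩))).1
        obtain ⟨e1, e2⟩ := hpin c1 c2 hc12 hc2N hxI H'
        subst e1; subst e2
        exact Finset.mem_insert_self _ _
      · -- e does not cross I, so e ∈ T already
        have heT : s(C.V c1, C.V c2) ∈ C.T := by
          refine C.hT.maximal _ hpoly ?_
          intro f hf
          by_cases hfI : f = s(C.V i1, C.V i2)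
          · subst hfI
            constructor
            · rw [C.crosses_iff hc12 hc2N hi1 hi2]
              omega
            · rw [C.crosses_iff hi1 hi2 hc12 hc2N]
              omega
          · exact H f (Finset.mem_insert_of_mem (Finset.mem_erase.mpr ⟨hfI, hf⟩))
        exact Finset.mem_insert_of_mem (Finset.mem_erase.mpr ⟨heI, heT⟩)

end Ctx

end PolygonCA

namespace PolygonCA

namespace Ctx

variable {N : ℕ} (C : Ctx N)
include C

lemma ch_ne {t1 b1 t2 b2 : ℕ} (h1 : t1 < N) (h2 : b1 < N) (h3 : t2 < N) (h4 : b2 < N)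
    (h : ¬((t1 = t2 ∧ b1 = b2) ∨ (t1 = b2 ∧ b1 = t2))) :
    s(C.V t1, C.V b1) ≠ s(C.V t2, C.V b2) := by
  intro he
  rw [C.sym2_eq h1 h2 h3 h4] at he
  exact h he

/-- flip along the top, previous chord shares the bottom endpoint. -/
lemma flip_top_prevtop {u b c : ℕ} (hu : 2 ≤ u) (hc : c = u + 1) (hcm : c ≤ C.m)
    (hb1 : C.m < b) (hb2 : b < N)
    (hI : C.Ch u b) (hprev : C.Ch (u - 1) b)
    (hsing : ∀ b', C.m < b' → b' < N → C.Ch u b' → b' = b)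
    (hnext : (c < C.m ∧ C.Ch c b) ∨ (c = C.m ∧ b = C.m + 1)) :
    IsFlip N C.T s(C.V u, C.V b) s(C.V (u - 1), C.V c) := by
  have hm := C.hm
  have hN := C.hN
  have hprevne : s(C.V (u-1), C.V b) ≠ s(C.V u, C.V b) :=
    C.ch_ne (by omega) (by omega) (by omega) (by omega) (by omega)
  refine C.flip_generic (by omega) hb2 (by omega) (by omega) hI
    (C.polydiag_coords (by omega) (by omega) (by omega) (by omega)) (by omega) ?_ ?_
  · -- hMnc
    intro f hf hne
    obtain ⟨t', b', hv', rfl⟩ := C.chord_coords hf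
    have hne' : ¬(t' = u ∧ b' = b) := by
      intro ⟨e1, e2⟩; exact hne (by rw [e1, e2])
    by_cases ht' : t' = u
    · subst ht'
      have := hsing b' hv'.2.2.1 hv'.2.2.2 hf
      omega
    · constructor
      · rw [C.crosses_iff (by omega) (by omega) (by omega) (by omega)]
        omega
      · rw [C.crosses_iff (by omega) (by omega) (by omega) (by omega)]
        omega
  · -- hpin
    intro c1 c2 hc12 hc2N hx Hnc
    have k0 := Hnc _ hprev hprevne
    rw [C.crosses_iff hc12 hc2N (by omega) (by omega)] at k0
    rcases hx with ⟨hA1, hA2, hA3⟩ | ⟨hA1, hA2, hA3⟩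
    · have e1 : c1 = u - 1 := by omega
      rcases hnext with ⟨hn1, hn2⟩ | ⟨hn1, hn2⟩
      · have k1 := Hnc _ hn2 (C.ch_ne (by omega) (by omega) (by omega) (by omega) (by omega))
        rw [C.crosses_iff hc12 hc2N (by omega) (by omega)] at k1
        omega
      · omega
    · omega

/-- flip along the top, previous chord shares the top endpoint. -/
lemma flip_top_prevbot {u b c : ℕ} (hu : 1 ≤ u) (hc : c = u + 1) (hcm : c ≤ C.m)
    (hb1 : C.m < b) (hb2 : b + 1 < N)
    (hI : C.Ch u b) (hprev : C.Ch u (b + 1))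
    (hmin : ∀ b', C.m < b' → b' < N → C.Ch u b' → b ≤ b')
    (hnext : (c < C.m ∧ C.Ch c b) ∨ (c = C.m ∧ b = C.m + 1)) :
    IsFlip N C.T s(C.V u, C.V b) s(C.V c, C.V (b + 1)) := by
  have hm := C.hm
  have hN := C.hN
  have hprevne : s(C.V u, C.V (b+1)) ≠ s(C.V u, C.V b) :=
    C.ch_ne (by omega) (by omega) (by omega) (by omega) (by omega)
  refine C.flip_generic (by omega) (by omega) (by omega) (by omega) hI
    (C.polydiag_coords (by omega) (by omega) (by omega) (by omega)) (by omega) ?_ ?_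
  · -- hMnc
    intro f hf hne
    obtain ⟨t', b', hv', rfl⟩ := C.chord_coords hf
    have hne' : ¬(t' = u ∧ b' = b) := by
      intro ⟨e1, e2⟩; exact hne (by rw [e1, e2])
    by_cases ht' : t' = u
    · subst ht'
      have := hmin b' hv'.2.2.1 hv'.2.2.2 hf
      constructor
      · rw [C.crosses_iff (by omega) (by omega) (by omega) (by omega)]
        omega
      · rw [C.crosses_iff (by omega) (by omega) (by omega) (by omega)]
        omega
    · have k1 := C.nc hv' ⟨by omega, by omega, hb1, by omega⟩ hf hI
      have k2 := C.nc hv' ⟨by omega, by omega, by omega, hb2⟩ hf hprev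
      rcases hnext with ⟨hn1, hn2⟩ | ⟨hn1, hn2⟩
      · have k3 := C.nc hv' ⟨by omega, by omega, hb1, by omega⟩ hf hn2
        constructor
        · rw [C.crosses_iff (by omega) (by omega) (by omega) (by omega)]
          omega
        · rw [C.crosses_iff (by omega) (by omega) (by omega) (by omega)]
          omega
      · constructor
        · rw [C.crosses_iff (by omega) (by omega) (by omega) (by omega)]
          omega
        · rw [C.crosses_iff (by omega) (by omega) (by omega) (by omega)]
          omega
  · -- hpin
    intro c1 c2 hc12 hc2N hx Hnc
    have k0 := Hnc _ hprev hprevne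
    rw [C.crosses_iff hc12 hc2N (by omega) (by omega)] at k0
    rcases hx with ⟨hA1, hA2, hA3⟩ | ⟨hA1, hA2, hA3⟩
    · omega
    · have e2 : c2 = b + 1 := by omega
      rcases hnext with ⟨hn1, hn2⟩ | ⟨hn1, hn2⟩
      · have k1 := Hnc _ hn2 (C.ch_ne (by omega) (by omega) (by omega) (by omega) (by omega))
        rw [C.crosses_iff hc12 hc2N (by omega) (by omega)] at k1
        omega
      · omega

/-- flip of the ear at `A`, towards the top target `c = 2`. -/
lemma flip_top_base {c : ℕ} (hc : c = 2) (hcm : c ≤ C.m)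
    (hI : C.Ch 1 (N - 1))
    (hsing : ∀ b', C.m < b' → b' < N → C.Ch 1 b' → b' = N - 1)
    (hnext : (c < C.m ∧ C.Ch c (N - 1)) ∨ (c = C.m ∧ N - 1 = C.m + 1)) :
    IsFlip N C.T s(C.V 1, C.V (N - 1)) s(C.V 0, C.V c) := by
  have hm := C.hm
  have hN := C.hN
  refine C.flip_generic (by omega) (by omega) (by omega) (by omega) hI
    (C.polydiag_coords (by omega) (by omega) (by omega) (by omega)) (by omega) ?_ ?_
  · intro f hf hne
    obtain ⟨t', b', hv', rfl⟩ := C.chord_coords hf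
    have hne' : ¬(t' = 1 ∧ b' = N - 1) := by
      intro ⟨e1, e2⟩; exact hne (by rw [e1, e2])
    by_cases ht' : t' = 1
    · subst ht'
      have := hsing b' hv'.2.2.1 hv'.2.2.2 hf
      omega
    · constructor
      · rw [C.crosses_iff (by omega) (by omega) (by omega) (by omega)]
        omega
      · rw [C.crosses_iff (by omega) (by omega) (by omega) (by omega)]
        omega
  · intro c1 c2 hc12 hc2N hx Hnc
    rcases hx with ⟨hA1, hA2, hA3⟩ | ⟨hA1, hA2, hA3⟩
    · have e1 : c1 = 0 := by omega
      rcases hnext with ⟨hn1, hn2⟩ | ⟨hn1, hn2⟩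
      · have k1 := Hnc _ hn2 (C.ch_ne (by omega) (by omega) (by omega) (by omega) (by omega))
        rw [C.crosses_iff hc12 hc2N (by omega) (by omega)] at k1
        omega
      · omega
    · omega

/-- flip along the bottom, previous chord shares the bottom endpoint. -/
lemma flip_bot_prevtopside {t u c : ℕ} (ht : 2 ≤ t) (htm : t < C.m)
    (hu : u = c + 1) (hcm : C.m < c) (huN : u ≤ N - 1)
    (hI : C.Ch t u) (hprev : C.Ch (t - 1) u)
    (hmax : ∀ t', 1 ≤ t' → t' < C.m → C.Ch t' u → t' ≤ t)
    (hnext : C.Ch t c) :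
    IsFlip N C.T s(C.V t, C.V u) s(C.V (t - 1), C.V c) := by
  have hm := C.hm
  have hN := C.hN
  have hprevne : s(C.V (t-1), C.V u) ≠ s(C.V t, C.V u) :=
    C.ch_ne (by omega) (by omega) (by omega) (by omega) (by omega)
  refine C.flip_generic (by omega) (by omega) (by omega) (by omega) hI
    (C.polydiag_coords (by omega) (by omega) (by omega) (by omega)) (by omega) ?_ ?_
  · intro f hf hne
    obtain ⟨t', b', hv', rfl⟩ := C.chord_coords hf
    have hne' : ¬(t' = t ∧ b' = u) := by
      intro ⟨e1, e2⟩; exact hne (by rw [e1, e2])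
    have k1 := C.nc hv' ⟨by omega, htm, by omega, by omega⟩ hf hI
    have k2 := C.nc hv' ⟨by omega, by omega, by omega, by omega⟩ hf hprev
    have k3 : C.Ch t' u → t' ≤ t := fun h => hmax t' hv'.1 hv'.2.1 h
    by_cases hb' : b' = u
    · subst hb'
      have := k3 hf
      constructor
      · rw [C.crosses_iff (by omega) (by omega) (by omega) (by omega)]
        omega
      · rw [C.crosses_iff (by omega) (by omega) (by omega) (by omega)]
        omega
    · constructor
      · rw [C.crosses_iff (by omega) (by omega) (by omega) (by omega)]
        omega
      · rw [C.crosses_iff (by omega) (by omega) (by omega) (by omega)]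
        omega
  · intro c1 c2 hc12 hc2N hx Hnc
    have k0 := Hnc _ hprev hprevne
    rw [C.crosses_iff hc12 hc2N (by omega) (by omega)] at k0
    rcases hx with ⟨hA1, hA2, hA3⟩ | ⟨hA1, hA2, hA3⟩
    · have e1 : c1 = t - 1 := by omega
      have k1 := Hnc _ hnext (C.ch_ne (by omega) (by omega) (by omega) (by omega) (by omega))
      rw [C.crosses_iff hc12 hc2N (by omega) (by omega)] at k1
      omega
    · omega

/-- flip along the bottom, previous chord shares the top endpoint. -/
lemma flip_bot_prevbotside {t u c : ℕ} (ht : 1 ≤ t) (htm : t < C.m)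
    (hu : u = c + 1) (hcm : C.m < c) (huN : u + 1 ≤ N - 1)
    (hI : C.Ch t u) (hprev : C.Ch t (u + 1))
    (hsing : ∀ t', 1 ≤ t' → t' < C.m → C.Ch t' u → t' = t)
    (hnext : C.Ch t c) :
    IsFlip N C.T s(C.V t, C.V u) s(C.V c, C.V (u + 1)) := by
  have hm := C.hm
  have hN := C.hN
  have hprevne : s(C.V t, C.V (u+1)) ≠ s(C.V t, C.V u) :=
    C.ch_ne (by omega) (by omega) (by omega) (by omega) (by omega)
  refine C.flip_generic (by omega) (by omega) (by omega) (by omega) hI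
    (C.polydiag_coords (by omega) (by omega) (by omega) (by omega)) (by omega) ?_ ?_
  · intro f hf hne
    obtain ⟨t', b', hv', rfl⟩ := C.chord_coords hf
    have hne' : ¬(t' = t ∧ b' = u) := by
      intro ⟨e1, e2⟩; exact hne (by rw [e1, e2])
    by_cases hb' : b' = u
    · subst hb'
      have := hsing t' hv'.1 hv'.2.1 hf
      omega
    · constructor
      · rw [C.crosses_iff (by omega) (by omega) (by omega) (by omega)]
        omega
      · rw [C.crosses_iff (by omega) (by omega) (by omega) (by omega)]
        omega
  · intro c1 c2 hc12 hc2N hx Hnc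
    have k0 := Hnc _ hprev hprevne
    rw [C.crosses_iff hc12 hc2N (by omega) (by omega)] at k0
    rcases hx with ⟨hA1, hA2, hA3⟩ | ⟨hA1, hA2, hA3⟩
    · omega
    · have e2 : c2 = u + 1 := by omega
      have k1 := Hnc _ hnext (C.ch_ne (by omega) (by omega) (by omega) (by omega) (by omega))
      rw [C.crosses_iff hc12 hc2N (by omega) (by omega)] at k1
      omega

/-- flip of the ear at `A`, towards the bottom target `c = N - 2`. -/
lemma flip_bot_base {c : ℕ} (hc : c = N - 2) (hcm : C.m < c)
    (hI : C.Ch 1 (N - 1))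
    (hsing : ∀ t', 1 ≤ t' → t' < C.m → C.Ch t' (N - 1) → t' = 1)
    (hnext : C.Ch 1 c) :
    IsFlip N C.T s(C.V 1, C.V (N - 1)) s(C.V 0, C.V c) := by
  have hm := C.hm
  have hN := C.hN
  refine C.flip_generic (by omega) (by omega) (by omega) (by omega) hI
    (C.polydiag_coords (by omega) (by omega) (by omega) (by omega)) (by omega) ?_ ?_
  · intro f hf hne
    obtain ⟨t', b', hv', rfl⟩ := C.chord_coords hf
    have hne' : ¬(t' = 1 ∧ b' = N - 1) := by
      intro ⟨e1, e2⟩; exact hne (by rw [e1, e2])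
    by_cases hb' : b' = N - 1
    · subst hb'
      have := hsing t' hv'.1 hv'.2.1 hf
      omega
    · constructor
      · rw [C.crosses_iff (by omega) (by omega) (by omega) (by omega)]
        omega
      · rw [C.crosses_iff (by omega) (by omega) (by omega) (by omega)]
        omega
  · intro c1 c2 hc12 hc2N hx Hnc
    rcases hx with ⟨hA1, hA2, hA3⟩ | ⟨hA1, hA2, hA3⟩
    · have e1 : c1 = 0 := by omega
      have k1 := Hnc _ hnext (C.ch_ne (by omega) (by omega) (by omega) (by omega) (by omega))
      rw [C.crosses_iff hc12 hc2N (by omega) (by omega)] at k1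
      omega
    · omega

end Ctx

end PolygonCA

namespace PolygonCA

namespace Ctx

variable {N : ℕ} (C : Ctx N)
include C

lemma bdry (a : ℕ) : IsBoundaryArc N s(C.V a, C.V (a + 1)) :=
  ⟨C.V a, by rw [C.V_succ]⟩

lemma bdryA : IsBoundaryArc N s(C.A, C.V 1) := by
  rw [← C.V_zero]
  exact C.bdry 0

lemma bdryA' : IsBoundaryArc N s(C.A, C.V (N - 1)) := by
  have hN := C.hN
  refine ⟨C.V (N - 1), ?_⟩
  rw [C.V_succ]
  have h : N - 1 + 1 = N := by omega
  rw [h, C.V_cycle, C.V_zero, Sym2.eq_swap]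

/-- boundary edge between adjacent top vertices sharing a bottom partner is in `E_AB`. -/
lemma memE_top_adj {a b : ℕ} (ha : 1 ≤ a) (ham : a + 1 < C.m) (hb1 : C.m < b) (hb2 : b < N)
    (h1 : C.Ch a b) (h2 : C.Ch (a + 1) b) :
    MemE N C.T C.A C.B s(C.V a, C.V (a + 1)) := by
  have hm := C.hm
  have hN := C.hN
  have hAV : C.A = C.V 0 := C.V_zero.symm
  have hBV : C.B = C.V C.m := C.V_m.symm
  refine ⟨C.bdry a, C.V a, C.V (a + 1), C.V b, ?_, ?_, ?_, ?_, ?_, ?_, ?_, rfl, ?_, ?_⟩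
  · refine ⟨?_, ?_, ?_, Or.inr (C.bdry a), Or.inl h2, Or.inl h1⟩
    · intro h; have := C.V_inj (by omega) (by omega) h; omega
    · intro h; have := C.V_inj (by omega) (by omega) h; omega
    · intro h; have := C.V_inj (by omega) (by omega) h; omega
  · rw [hAV]; intro h; have := C.V_inj (by omega) (by omega) h; omega
  · rw [hAV]; intro h; have := C.V_inj (by omega) (by omega) h; omega
  · rw [hAV]; intro h; have := C.V_inj (by omega) (by omega) h; omega
  · rw [hBV]; intro h; have := C.V_inj (by omega) (by omega) h; omega
  · rw [hBV]; intro h; have := C.V_inj (by omega) (by omega) h; omega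
  · rw [hBV]; intro h; have := C.V_inj (by omega) (by omega) h; omega
  · exact C.hall _ h2
  · exact C.hall _ h1

/-- boundary edge between adjacent bottom vertices sharing a top partner is in `E_AB`. -/
lemma memE_bot_adj {a t : ℕ} (hma : C.m < a) (haN : a + 1 < N) (ht1 : 1 ≤ t) (ht2 : t < C.m)
    (h1 : C.Ch t a) (h2 : C.Ch t (a + 1)) :
    MemE N C.T C.A C.B s(C.V a, C.V (a + 1)) := by
  have hm := C.hm
  have hN := C.hN
  have hAV : C.A = C.V 0 := C.V_zero.symm
  have hBV : C.B = C.V C.m := C.V_m.symm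
  have h2' : s(C.V (a + 1), C.V t) ∈ C.T := by rwa [Sym2.eq_swap]
  have h1' : s(C.V a, C.V t) ∈ C.T := by rwa [Sym2.eq_swap]
  refine ⟨C.bdry a, C.V a, C.V (a + 1), C.V t, ?_, ?_, ?_, ?_, ?_, ?_, ?_, rfl, ?_, ?_⟩
  · refine ⟨?_, ?_, ?_, Or.inr (C.bdry a), Or.inl h2', Or.inl h1'⟩
    · intro h; have := C.V_inj (by omega) (by omega) h; omega
    · intro h; have := C.V_inj (by omega) (by omega) h; omega
    · intro h; have := C.V_inj (by omega) (by omega) h; omega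
  · rw [hAV]; intro h; have := C.V_inj (by omega) (by omega) h; omega
  · rw [hAV]; intro h; have := C.V_inj (by omega) (by omega) h; omega
  · rw [hAV]; intro h; have := C.V_inj (by omega) (by omega) h; omega
  · rw [hBV]; intro h; have := C.V_inj (by omega) (by omega) h; omega
  · rw [hBV]; intro h; have := C.V_inj (by omega) (by omega) h; omega
  · rw [hBV]; intro h; have := C.V_inj (by omega) (by omega) h; omega
  · have h := C.hall _ h2
    rwa [show s(C.V (a + 1), C.V t) = s(C.V t, C.V (a + 1)) from Sym2.eq_swap]
  · have h := C.hall _ h1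
    rwa [show s(C.V a, C.V t) = s(C.V t, C.V a) from Sym2.eq_swap]

lemma Vval0 {a : ℕ} (h : a < N) : (C.V a - C.A).val = a := by
  have := C.Vfacts 0 a C.hNpos h
  rw [C.V_zero] at this
  omega

/-- the Ptolemy relation for the quadrilateral `A, V a, V b, V c`. -/
lemma ptolemy_coords {F : Type*} [Field F] {x : Sym2 (ZMod N) → F} (hx : IsPtolemy N x)
    {a b c : ℕ} (h0 : 0 < a) (hab : a < b) (hbc : b < c) (hcN : c < N) :
    x s(C.A, C.V b) * x s(C.V a, C.V c) =
      x s(C.A, C.V a) * x s(C.V b, C.V c) + x s(C.A, C.V c) * x s(C.V a, C.V b) := by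
  refine hx.2 C.A (C.V a) (C.V b) (C.V c) ?_
  have e1 := C.Vval0 (show a < N by omega)
  have e2 := C.Vval0 (show b < N by omega)
  have e3 := C.Vval0 hcN
  exact ⟨by rw [e1]; omega, by rw [e1, e2]; omega, by rw [e2, e3]; omega⟩

noncomputable def mu (c : ℕ) : ℕ :=
  if c ≤ 1 ∨ N - 1 ≤ c then 0
  else if c ≤ C.m then c + (N - C.bmin (c - 1))
  else (N - c) + C.tmax (c + 1)

lemma mu_small {c : ℕ} (h : c ≤ 1 ∨ N - 1 ≤ c) : C.mu c = 0 := by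
  rw [Ctx.mu, if_pos h]

lemma mu_val_top {c : ℕ} (h2 : 2 ≤ c) (hcm : c ≤ C.m) :
    C.mu c = c + (N - C.bmin (c - 1)) := by
  have hm := C.hm
  rw [Ctx.mu, if_neg (by omega), if_pos hcm]

lemma mu_val_bot {c : ℕ} (hmc : C.m < c) (hc : c ≤ N - 2) :
    C.mu c = (N - c) + C.tmax (c + 1) := by
  have hm := C.hm
  rw [Ctx.mu, if_neg (by omega), if_neg (by omega)]

lemma bmin_ge_of {t u b : ℕ} (hum : u < C.m) (hb1 : C.m < b) (hb2 : b < N)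
    (hI : C.Ch u b) (h1 : 1 ≤ t) (h2 : t < u) : b ≤ C.bmin t := by
  obtain ⟨s1, s2, s3⟩ := C.bmin_spec h1 (by omega)
  have := C.nc ⟨h1, by omega, s1, s2⟩ ⟨by omega, hum, hb1, hb2⟩ s3 hI
  omega

lemma tmax_le_of {u b d : ℕ} (hu1 : 1 ≤ u) (hum : u < C.m) (hb1 : C.m < b) (hb2 : b < N)
    (hI : C.Ch u b) (hd : b < d) (hdN : d < N) : C.tmax d ≤ u := by
  obtain ⟨s1, s2, s3⟩ := C.tmax_spec (u := d) (by omega) hdN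
  have := C.nc ⟨s1, s2, by omega, hdN⟩ ⟨hu1, hum, hb1, hb2⟩ s3 hI
  omega

end Ctx

lemma solve_lin {F : Type*} [Field F] {X P Q S R D : F} (h : P * Q - S * R = X * D)
    (hD : D ≠ 0) : X = (P * Q - S * R) * D⁻¹ := by
  rw [eq_mul_inv_iff_mul_eq₀ hD]
  linear_combination -h

end PolygonCA

namespace PolygonCA

namespace Ctx

variable {N : ℕ} (C : Ctx N)
include C

lemma good {F : Type*} [Field F] (x : Sym2 (ZMod N) → F) (hx : IsPtolemy N x) :
    ∀ n c, 1 ≤ c → c < N → C.mu c = n →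
      x s(C.A, C.V c) ∈ Subring.closure
        ({y | ∃ τ ∈ C.T, y = x τ} ∪
         {y | ∃ τ ∈ C.T, ∃ M, IsFlip N C.T τ M ∧ y = x M} ∪
         {y | ∃ e, IsBoundaryArc N e ∧ y = x e} ∪
         {y | ∃ e, MemE N C.T C.A C.B e ∧ y = (x e)⁻¹}) := by
  have hm := C.hm
  have hN := C.hN
  set S : Set F :=
    ({y | ∃ τ ∈ C.T, y = x τ} ∪
     {y | ∃ τ ∈ C.T, ∃ M, IsFlip N C.T τ M ∧ y = x M} ∪
     {y | ∃ e, IsBoundaryArc N e ∧ y = x e} ∪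
     {y | ∃ e, MemE N C.T C.A C.B e ∧ y = (x e)⁻¹}) with hS
  have genT : ∀ a b : ℕ, C.Ch a b → x s(C.V a, C.V b) ∈ Subring.closure S := by
    intro a b h
    apply Subring.subset_closure
    rw [hS]
    exact Set.mem_union_left _ (Set.mem_union_left _ (Set.mem_union_left _ ⟨_, h, rfl⟩))
  have genF : ∀ τ M' : Sym2 (ZMod N), τ ∈ C.T → IsFlip N C.T τ M' →
      x M' ∈ Subring.closure S := by
    intro τ M' hτ hfl
    apply Subring.subset_closure
    rw [hS]
    exact Set.mem_union_left _ (Set.mem_union_left _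
      (Set.mem_union_right _ ⟨τ, hτ, M', hfl, rfl⟩))
  have genB : ∀ e, IsBoundaryArc N e → x e ∈ Subring.closure S := by
    intro e he
    apply Subring.subset_closure
    rw [hS]
    exact Set.mem_union_left _ (Set.mem_union_right _ ⟨e, he, rfl⟩)
  have genE : ∀ e, MemE N C.T C.A C.B e → (x e)⁻¹ ∈ Subring.closure S := by
    intro e he
    apply Subring.subset_closure
    rw [hS]
    exact Set.mem_union_right _ ⟨e, he, rfl⟩
  intro n
  induction n using Nat.strong_induction_on with
  | _ n ih =>
  intro c h1 h2 hmu
  rcases Nat.lt_or_ge c 2 with hc | hc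
  · have hc1 : c = 1 := by omega
    subst hc1
    exact genB _ C.bdryA
  by_cases hcN1 : c = N - 1
  · subst hcN1
    exact genB _ C.bdryA'
  by_cases hcm : c ≤ C.m
  · -- top side
    obtain ⟨s1, s2, s3⟩ := C.bmin_spec (u := c - 1) (by omega) (by omega)
    set b := C.bmin (c - 1) with hb
    have hmuv : C.mu c = c + (N - b) := C.mu_val_top hc hcm
    have hnext : (c < C.m ∧ C.Ch c b) ∨ (c = C.m ∧ b = C.m + 1) := by
      rcases Nat.lt_or_ge c C.m with h | h
      · exact Or.inl ⟨h, C.F2top hc h⟩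
      · have hcm' : c = C.m := by omega
        refine Or.inr ⟨hcm', ?_⟩
        have e1 : c - 1 = C.m - 1 := by omega
        rw [hb, e1]
        exact C.bmin_m
    by_cases hP2 : ∃ b', (C.m < b' ∧ b' < N ∧ C.Ch (c - 1) b') ∧ b' ≠ b
    · -- previous chord shares the top endpoint `c - 1`
      obtain ⟨b', hb'v, hb'ne⟩ := hP2
      have hprev : C.Ch (c - 1) (b + 1) := by
        have := C.tri_prevbot (u := c - 1) (by omega) (by omega) hb'v (by rw [← hb]; exact hb'ne)
        rwa [← hb] at this
      have hbN : b + 1 < N := by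
        have := C.bmin_le hb'v.1 hb'v.2.1 hb'v.2.2
        rw [← hb] at this
        omega
      have hflip := C.flip_top_prevbot (u := c - 1) (c := c) (b := b) (by omega) (by omega)
        hcm s1 hbN s3 hprev (fun b'' k1 k2 k3 => by rw [hb]; exact C.bmin_le k1 k2 k3) hnext
      have hMc : x s(C.V c, C.V (b + 1)) ∈ Subring.closure S := genF _ _ s3 hflip
      have hEc : (x s(C.V b, C.V (b + 1)))⁻¹ ∈ Subring.closure S :=
        genE _ (C.memE_bot_adj s1 hbN (by omega) (by omega) s3 hprev)
      have hrel := C.ptolemy_coords hx (a := c) (b := b) (c := b + 1)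
        (by omega) (by omega) (by omega) hbN
      have hDne : x s(C.V b, C.V (b + 1)) ≠ 0 := hx.1 _ (Or.inr (C.bdry b))
      have hsol : x s(C.A, C.V c) =
          (x s(C.A, C.V b) * x s(C.V c, C.V (b + 1)) -
            x s(C.A, C.V (b + 1)) * x s(C.V c, C.V b)) * (x s(C.V b, C.V (b + 1)))⁻¹ :=
        solve_lin (by linear_combination hrel) hDne
      rw [hsol]
      have ih1 : x s(C.A, C.V b) ∈ Subring.closure S := by
        refine ih (C.mu b) ?_ b (by omega) (by omega) rfl
        rw [← hmu, hmuv]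
        rcases Nat.lt_or_ge b (N - 1) with hbb | hbb
        · rw [C.mu_val_bot (by omega) (by omega)]
          have := C.tmax_le_of (u := c - 1) (b := b) (d := b + 1)
            (by omega) (by omega) s1 s2 s3 (by omega) (by omega)
          omega
        · rw [C.mu_small (Or.inr hbb)]; omega
      have ih2 : x s(C.A, C.V (b + 1)) ∈ Subring.closure S := by
        refine ih (C.mu (b + 1)) ?_ (b + 1) (by omega) (by omega) rfl
        rw [← hmu, hmuv]
        rcases Nat.lt_or_ge (b + 1) (N - 1) with hbb | hbb
        · rw [C.mu_val_bot (by omega) (by omega)]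
          have := C.tmax_le_of (u := c - 1) (b := b) (d := b + 1 + 1)
            (by omega) (by omega) s1 s2 s3 (by omega) (by omega)
          omega
        · rw [C.mu_small (Or.inr hbb)]; omega
      have hcb : x s(C.V c, C.V b) ∈ Subring.closure S := by
        rcases hnext with ⟨h, hch⟩ | ⟨hceq, hbeq⟩
        · exact genT _ _ hch
        · rw [hbeq, hceq]
          exact genB _ (C.bdry C.m)
      exact Subring.mul_mem _ (Subring.sub_mem _ (Subring.mul_mem _ ih1 hMc)
        (Subring.mul_mem _ ih2 hcb)) hEc
    · push_neg at hP2
      have hsing : ∀ b', C.m < b' → b' < N → C.Ch (c - 1) b' → b' = b :=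
        fun b' k1 k2 k3 => hP2 b' ⟨k1, k2, k3⟩
      by_cases hbase : c - 1 = 1
      · -- base case: the ear at A
        have e1 : c - 1 = 1 := hbase
        rw [e1] at hb
        have hbN1 : b = N - 1 := by
          have := C.tri_base_top (fun b' k1 k2 k3 =>
            hb ▸ hsing b' k1 k2 (by rw [e1]; exact k3))
          omega
        rw [hbN1] at s3
        rw [e1] at s3
        have hflip := C.flip_top_base (c := c) (by omega) hcm s3
          (fun b' k1 k2 k3 => by
            have h5 := hsing b' k1 k2 (by rw [e1]; exact k3)
            omega)
          (by
            rcases hnext with ⟨h, hch⟩ | ⟨hceq, hbeq⟩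
            · exact Or.inl ⟨h, by rwa [hbN1] at hch⟩
            · exact Or.inr ⟨hceq, by omega⟩)
        have : s(C.A, C.V c) = s(C.V 0, C.V c) := by rw [C.V_zero]
        rw [this]
        exact genF _ _ s3 hflip
      · -- previous chord shares the bottom endpoint `b`
        have hu2 : 2 ≤ c - 1 := by omega
        have hprev : C.Ch (c - 1 - 1) b := by
          have := C.tri_prevtop (u := c - 1) hu2 (by omega)
            (fun b' k1 k2 k3 => by rw [← hb]; exact hsing b' k1 k2 k3)
          rwa [← hb] at this
        have hflip := C.flip_top_prevtop (u := c - 1) (c := c) (b := b) hu2 (by omega)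
          hcm s1 s2 s3 hprev hsing hnext
        have hMc : x s(C.V (c - 1 - 1), C.V c) ∈ Subring.closure S := genF _ _ s3 hflip
        have hEc : (x s(C.V (c - 1 - 1), C.V (c - 1 - 1 + 1)))⁻¹ ∈ Subring.closure S := by
          refine genE _ (C.memE_top_adj (a := c - 1 - 1) (by omega) (by omega) s1 s2 hprev ?_)
          have e2 : c - 1 - 1 + 1 = c - 1 := by omega
          rwa [e2]
        have e2 : c - 1 - 1 + 1 = c - 1 := by omega
        rw [e2] at hEc
        have hrel := C.ptolemy_coords hx (a := c - 1 - 1) (b := c - 1) (c := c)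
          (by omega) (by omega) (by omega) (by omega)
        have hDne : x s(C.V (c - 1 - 1), C.V (c - 1)) ≠ 0 := by
          have hbd : IsBoundaryArc N s(C.V (c - 1 - 1), C.V (c - 1)) := by
            have := C.bdry (c - 1 - 1)
            rwa [e2] at this
          exact hx.1 _ (Or.inr hbd)
        have hsol : x s(C.A, C.V c) =
            (x s(C.A, C.V (c - 1)) * x s(C.V (c - 1 - 1), C.V c) -
              x s(C.A, C.V (c - 1 - 1)) * x s(C.V (c - 1), C.V c)) *
              (x s(C.V (c - 1 - 1), C.V (c - 1)))⁻¹ :=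
          solve_lin (by linear_combination hrel) hDne
      
        rw [hsol]
        have ih1 : x s(C.A, C.V (c - 1)) ∈ Subring.closure S := by
          refine ih (C.mu (c - 1)) ?_ (c - 1) (by omega) (by omega) rfl
          rw [← hmu, hmuv]
          rw [C.mu_val_top (by omega) (by omega)]
          have := C.bmin_ge_of (t := c - 1 - 1) (u := c - 1) (b := b)
            (by omega) s1 s2 s3 (by omega) (by omega)
          omega
        have ih2 : x s(C.A, C.V (c - 1 - 1)) ∈ Subring.closure S := by
          refine ih (C.mu (c - 1 - 1)) ?_ (c - 1 - 1) (by omega) (by omega) rfl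
          rw [← hmu, hmuv]
          rcases Nat.lt_or_ge (c - 1 - 1) 2 with hsm | hsm
          · rw [C.mu_small (Or.inl (by omega))]; omega
          · rw [C.mu_val_top (by omega) (by omega)]
            have := C.bmin_ge_of (t := c - 1 - 1 - 1) (u := c - 1) (b := b)
              (by omega) s1 s2 s3 (by omega) (by omega)
            omega
        have hcb : x s(C.V (c - 1), C.V c) ∈ Subring.closure S := by
          have hbd : IsBoundaryArc N s(C.V (c - 1), C.V c) := by
            have := C.bdry (c - 1)
            have e3 : c - 1 + 1 = c := by omega
            rwa [e3] at this
          exact genB _ hbd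
        exact Subring.mul_mem _ (Subring.sub_mem _ (Subring.mul_mem _ ih1 hMc)
          (Subring.mul_mem _ ih2 hcb)) hEc
  · -- bottom side
    have hmc : C.m < c := by omega
    have hcN2 : c ≤ N - 2 := by omega
    obtain ⟨s1, s2, s3⟩ := C.tmax_spec (u := c + 1) (by omega) (by omega)
    set t := C.tmax (c + 1) with ht
    have hmuv : C.mu c = (N - c) + t := C.mu_val_bot hmc hcN2
    have hnext : C.Ch t c := by
      have := C.F2bot hmc (by omega)
      rwa [← ht] at this
    by_cases hQ2 : ∃ t', (1 ≤ t' ∧ t' < C.m ∧ C.Ch t' (c + 1)) ∧ t' ≠ t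
    · obtain ⟨t', ht'v, ht'ne⟩ := hQ2
      have hprev : C.Ch (t - 1) (c + 1) := by
        have := C.tri_prevtopside (u := c + 1) (by omega) (by omega) ht'v
          (by rw [← ht]; exact ht'ne)
        rwa [← ht] at this
      have ht2 : 2 ≤ t := by
        have := C.tmax_ge ht'v.1 ht'v.2.1 ht'v.2.2
        rw [← ht] at this
        omega
      have hflip := C.flip_bot_prevtopside (t := t) (u := c + 1) (c := c) ht2 s2 rfl hmc
        (by omega) s3 hprev (fun t'' k1 k2 k3 => by rw [ht]; exact C.tmax_ge k1 k2 k3) hnext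
      have hMc : x s(C.V (t - 1), C.V c) ∈ Subring.closure S := genF _ _ s3 hflip
      have hEc : (x s(C.V (t - 1), C.V (t - 1 + 1)))⁻¹ ∈ Subring.closure S := by
        refine genE _ (C.memE_top_adj (a := t - 1) (by omega) (by omega) (by omega) (by omega)
          hprev ?_)
        have e2 : t - 1 + 1 = t := by omega
        rwa [e2]
      have e2 : t - 1 + 1 = t := by omega
      rw [e2] at hEc
      have hrel := C.ptolemy_coords hx (a := t - 1) (b := t) (c := c)
        (by omega) (by omega) (by omega) (by omega)
      have hDne : x s(C.V (t - 1), C.V t) ≠ 0 := by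
        have hbd : IsBoundaryArc N s(C.V (t - 1), C.V t) := by
          have := C.bdry (t - 1)
          rwa [e2] at this
        exact hx.1 _ (Or.inr hbd)
      have hsol : x s(C.A, C.V c) =
          (x s(C.A, C.V t) * x s(C.V (t - 1), C.V c) -
            x s(C.A, C.V (t - 1)) * x s(C.V t, C.V c)) * (x s(C.V (t - 1), C.V t))⁻¹ :=
        solve_lin (by linear_combination hrel) hDne
      rw [hsol]
      have ih1 : x s(C.A, C.V t) ∈ Subring.closure S := by
        refine ih (C.mu t) ?_ t (by omega) (by omega) rfl
        rw [← hmu, hmuv]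
        rw [C.mu_val_top (by omega) (by omega)]
        have := C.bmin_ge_of (t := t - 1) (u := t) (b := c + 1)
          s2 (by omega) (by omega) s3 (by omega) (by omega)
        omega
      have ih2 : x s(C.A, C.V (t - 1)) ∈ Subring.closure S := by
        refine ih (C.mu (t - 1)) ?_ (t - 1) (by omega) (by omega) rfl
        rw [← hmu, hmuv]
        rcases Nat.lt_or_ge (t - 1) 2 with hsm | hsm
        · rw [C.mu_small (Or.inl (by omega))]; omega
        · rw [C.mu_val_top (by omega) (by omega)]
          have := C.bmin_ge_of (t := t - 1 - 1) (u := t) (b := c + 1)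
            s2 (by omega) (by omega) s3 (by omega) (by omega)
          omega
      have hcb : x s(C.V t, C.V c) ∈ Subring.closure S := genT _ _ hnext
      exact Subring.mul_mem _ (Subring.sub_mem _ (Subring.mul_mem _ ih1 hMc)
        (Subring.mul_mem _ ih2 hcb)) hEc
    · push_neg at hQ2
      have hsing : ∀ t', 1 ≤ t' → t' < C.m → C.Ch t' (c + 1) → t' = t :=
        fun t' k1 k2 k3 => hQ2 t' ⟨k1, k2, k3⟩
      by_cases hbase : c + 1 = N - 1
      · -- base case: the ear at A, bottom side
        rw [hbase] at ht
        have ht1 : t = 1 := by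
          have := C.tri_base_bot (fun t' k1 k2 k3 => by
            rw [← ht]
            exact hsing t' k1 k2 (by rwa [hbase]))
          omega
        rw [ht1] at s3
        rw [hbase] at s3
        have hflip := C.flip_bot_base (c := c) (by omega) hmc s3
          (fun t' k1 k2 k3 => by
            have := hsing t' k1 k2 (by rwa [hbase])
            omega)
          (by rw [← ht1]; exact hnext)
        have : s(C.A, C.V c) = s(C.V 0, C.V c) := by rw [C.V_zero]
        rw [this]
        exact genF _ _ s3 hflip
      · have hc2N : c + 1 + 1 ≤ N - 1 := by omega
        have hprev : C.Ch t (c + 1 + 1) := by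
          have := C.tri_prevbotside (u := c + 1) (by omega) (by omega)
            (fun t' k1 k2 k3 => by rw [← ht]; exact hsing t' k1 k2 k3)
          rwa [← ht] at this
        have hflip := C.flip_bot_prevbotside (t := t) (u := c + 1) (c := c) s1 s2 rfl hmc
          hc2N s3 hprev hsing hnext
        have hMc : x s(C.V c, C.V (c + 1 + 1)) ∈ Subring.closure S := genF _ _ s3 hflip
        have hEc : (x s(C.V (c + 1), C.V (c + 1 + 1)))⁻¹ ∈ Subring.closure S :=
          genE _ (C.memE_bot_adj (a := c + 1) (by omega) (by omega) s1 s2 s3 hprev)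
        have hrel := C.ptolemy_coords hx (a := c) (b := c + 1) (c := c + 1 + 1)
          (by omega) (by omega) (by omega) (by omega)
        have hDne : x s(C.V (c + 1), C.V (c + 1 + 1)) ≠ 0 :=
          hx.1 _ (Or.inr (C.bdry (c + 1)))
        have hsol : x s(C.A, C.V c) =
            (x s(C.A, C.V (c + 1)) * x s(C.V c, C.V (c + 1 + 1)) -
              x s(C.A, C.V (c + 1 + 1)) * x s(C.V c, C.V (c + 1))) *
              (x s(C.V (c + 1), C.V (c + 1 + 1)))⁻¹ :=
          solve_lin (by linear_combination hrel) hDne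
        rw [hsol]
        have ih1 : x s(C.A, C.V (c + 1)) ∈ Subring.closure S := by
          refine ih (C.mu (c + 1)) ?_ (c + 1) (by omega) (by omega) rfl
          rw [← hmu, hmuv]
          rw [C.mu_val_bot (by omega) (by omega)]
          have := C.tmax_le_of (u := t) (b := c + 1) (d := c + 1 + 1)
            s1 s2 (by omega) (by omega) s3 (by omega) (by omega)
          omega
        have ih2 : x s(C.A, C.V (c + 1 + 1)) ∈ Subring.closure S := by
          refine ih (C.mu (c + 1 + 1)) ?_ (c + 1 + 1) (by omega) (by omega) rfl
          rw [← hmu, hmuv]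
          rcases Nat.lt_or_ge (c + 1 + 1) (N - 1) with hbb | hbb
          · rw [C.mu_val_bot (by omega) (by omega)]
            have := C.tmax_le_of (u := t) (b := c + 1) (d := c + 1 + 1 + 1)
              s1 s2 (by omega) (by omega) s3 (by omega) (by omega)
            omega
          · rw [C.mu_small (Or.inr hbb)]; omega
        have hcb : x s(C.V c, C.V (c + 1)) ∈ Subring.closure S := genB _ (C.bdry c)
        exact Subring.mul_mem _ (Subring.sub_mem _ (Subring.mul_mem _ ih1 hMc)
          (Subring.mul_mem _ ih2 hcb)) hEc

end Ctx

end PolygonCA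

namespace PolygonCA

/-- **Corollary of Section 5**: if every diagonal of `T` crosses the diagonal
`{A,B}`, then `x({A,B})` lies in the subring of `F` generated by the values of
`x` on the diagonals of `T`, on their mutant arcs, and on the boundary arcs,
together with the inverses of the values `x(e)` for `e ∈ E_{AB}`. -/
theorem laurent_in_mutants (N : ℕ) (hN : 4 ≤ N)
    (T : Finset (Sym2 (ZMod N))) (hT : IsTriangulation N T)
    (A B : ZMod N) (hAB : IsPolyDiag N s(A, B))
    (hall : ∀ τ ∈ T, Crosses N τ s(A, B))
    {F : Type*} [Field F] (x : Sym2 (ZMod N) → F) (hx : IsPtolemy N x) :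
    x s(A, B) ∈ Subring.closure
      ({y | ∃ τ ∈ T, y = x τ} ∪
       {y | ∃ τ ∈ T, ∃ M, IsFlip N T τ M ∧ y = x M} ∪
       {y | ∃ e, IsBoundaryArc N e ∧ y = x e} ∪
       {y | ∃ e, MemE N T A B e ∧ y = (x e)⁻¹}) := by
  let C : Ctx N := ⟨A, B, T, hN, hT, hAB, hall⟩
  have hm := C.hm
  have h := C.good x hx (C.mu C.m) C.m (by omega) (by omega) rfl
  rw [C.V_m] at h
  exact h

end PolygonCA
end
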